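/- arXiv:1611.03237 — 5 statements merged into one kernel-verified Lean document; each statement's English description precedes it below -/
import Mathlib

section
/- Fix a period L > 0, parameters d, α > 0 and admissible nonlinearities f₁, f₂ with zeros a₁, a₂. Let φ be a regular segregated pulsating front with speed s > 0 and set z(t,x) = φ(x − st, x). Assume additionally that ∂ₜz > 0 on the open set {z ≠ 0} and that for each t ∈ ℝ the function x ↦ z(t,x) has a unique zero Ξ(t), with Ξ continuous. Then for every t ∈ ℝ the one-sided limit ℓ(t) := lim_{x → Ξ(t)⁻} ∂ₓz(t,x) exists in ℝ and satisfies ℓ(t) ≤ 0; moreover ℓ is locally uniformly bounded from below: for every compact interval I ⊂ ℝ, inf_{t ∈ I} ℓ(t) > −∞. -/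
open MeasureTheory Set Filter Topology Function

noncomputable section

/-- An admissible nonlinearity with period `L` and zero `a`:
`f` is `C¹`, `L`-periodic in its second variable, positive at `u = 0` uniformly in `x`,
decreasing in its first variable, and vanishes at `u = a` for all `x`. -/
structure Admissible (L : ℝ) (f : ℝ → ℝ → ℝ) (a : ℝ) : Prop where
  smooth : ContDiff ℝ 1 (uncurry f)
  periodic : ∀ u x, f u (x + L) = f u x
  pos_at_zero : ∃ m > 0, ∀ x, m ≤ f 0 x
  strict_anti : ∀ x, StrictAnti (fun u => f u x)
  zero_pos : 0 < a
  zero_root : ∀ x, f a x = 0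

/-- `Zfun s φ t x = φ (x - s t, x)`. -/
def Zfun (s : ℝ) (φ : ℝ → ℝ → ℝ) : ℝ → ℝ → ℝ := fun t x => φ (x - s * t) x

/-- A regular segregated pulsating front with speed `s` and profile `φ`. -/
structure SegFront (L d α a₁ a₂ : ℝ) (f₁ f₂ : ℝ → ℝ → ℝ) (s : ℝ)
    (φ : ℝ → ℝ → ℝ) : Prop where
  cont : Continuous (uncurry φ)
  bdd : ∃ M, ∀ ξ x, |φ ξ x| ≤ M
  per : ∀ ξ x, φ ξ (x + L) = φ ξ x
  mono : ∀ x, Antitone (fun ξ => φ ξ x)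
  pos : ∃ ξ x, 0 < φ ξ x
  neg : ∃ ξ x, φ ξ x < 0
  lim_left : ∀ ε > 0, ∃ M, ∀ ξ, M ≤ ξ → ∀ x ∈ Icc (0:ℝ) L, |φ (-ξ) x - α * a₁| < ε
  lim_right : ∀ ε > 0, ∃ M, ∀ ξ, M ≤ ξ → ∀ x ∈ Icc (0:ℝ) L, |φ ξ x + d * a₂| < ε
  pde : ∃ zt zx zxx : ℝ → ℝ → ℝ,
    (∀ t x, Zfun s φ t x ≠ 0 → HasDerivAt (fun τ => Zfun s φ τ x) (zt t x) t) ∧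
    (∀ t x, Zfun s φ t x ≠ 0 → HasDerivAt (fun y => Zfun s φ t y) (zx t x) x) ∧
    (∀ t x, Zfun s φ t x ≠ 0 → HasDerivAt (fun y => zx t y) (zxx t x) x) ∧
    ContinuousOn (uncurry zt) {p : ℝ × ℝ | Zfun s φ p.1 p.2 ≠ 0} ∧
    ContinuousOn (uncurry zx) {p : ℝ × ℝ | Zfun s φ p.1 p.2 ≠ 0} ∧
    ContinuousOn (uncurry zxx) {p : ℝ × ℝ | Zfun s φ p.1 p.2 ≠ 0} ∧
    (∀ t x, 0 < Zfun s φ t x →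
      zt t x = zxx t x + Zfun s φ t x * f₁ (Zfun s φ t x / α) x) ∧
    (∀ t x, Zfun s φ t x < 0 →
      zt t x = d * zxx t x + Zfun s φ t x * f₂ (-(Zfun s φ t x) / d) x)

/-- The limiting nonlinearity `η(z, x)`. -/
def eta (d α : ℝ) (f₁ f₂ : ℝ → ℝ → ℝ) (z x : ℝ) : ℝ :=
  f₁ (z / α) x * max z 0 - (1 / d) * f₂ (-z / d) x * (-(min z 0))

/-- A segregated stationary equilibrium. -/
structure SegEquilibrium (L d α : ℝ) (f₁ f₂ : ℝ → ℝ → ℝ) (e : ℝ → ℝ) : Prop where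
  smooth : ContDiff ℝ 2 e
  bdd : ∃ M, ∀ x, |e x| ≤ M
  ode : ∀ x, -(deriv (deriv e) x) = eta d α f₁ f₂ (e x) x
  mono : ∀ x, Antitone (fun n : ℕ => e (x + n * L))
  pos : ∃ x, 0 < e x
  neg : ∃ x, e x < 0
  tail : BddBelow {x | e x < 0} ∨ BddAbove {x | 0 < e x}

/-- The Du–Lin solution on `[x₀, ∞)`: bounded, nonnegative, nonzero, `C²`, vanishing
at `x₀`, solving `-z'' = z f(z, ·)` on `(x₀, ∞)`. -/
structure IsDuLin (x₀ : ℝ) (f : ℝ → ℝ → ℝ) (z : ℝ → ℝ) : Prop where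
  diff1 : ∀ x ∈ Ici x₀, DifferentiableWithinAt ℝ z (Ici x₀) x
  diff2 : ∀ x ∈ Ici x₀,
    DifferentiableWithinAt ℝ (derivWithin z (Ici x₀)) (Ici x₀) x
  cont2 : ContinuousOn (derivWithin (derivWithin z (Ici x₀)) (Ici x₀)) (Ici x₀)
  bdd : ∃ M, ∀ x ∈ Ici x₀, |z x| ≤ M
  nonneg : ∀ x ∈ Ici x₀, 0 ≤ z x
  nonzero : ∃ x ∈ Ici x₀, z x ≠ 0
  zero_at : z x₀ = 0
  ode : ∀ x ∈ Ioi x₀,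
    -(derivWithin (derivWithin z (Ici x₀)) (Ici x₀) x) = z x * f (z x) x

/-- `∂ₜ` of a function of `(t, x)`. -/
def dT (u : ℝ → ℝ → ℝ) (t x : ℝ) : ℝ := deriv (fun τ => u τ x) t

/-- `∂ₓ` of a function of `(t, x)` (or of `(ξ, x)`). -/
def dX (u : ℝ → ℝ → ℝ) (t x : ℝ) : ℝ := deriv (fun y => u t y) x

/-- `∂ₓₓ` of a function of `(t, x)`. -/
def dXX (u : ℝ → ℝ → ℝ) (t x : ℝ) : ℝ := deriv (fun y => dX u t y) x

/-- `∂_ξ` of a profile. -/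
def dXi (φ : ℝ → ℝ → ℝ) (ξ x : ℝ) : ℝ := deriv (fun ζ => φ ζ x) ξ

/-- A pulsating front of the competition system `(P_k)`. -/
structure PkFront (L d α k a₁ a₂ : ℝ) (f₁ f₂ : ℝ → ℝ → ℝ) (c : ℝ)
    (φ₁ φ₂ : ℝ → ℝ → ℝ) : Prop where
  smooth1 : ContDiff ℝ 2 (uncurry φ₁)
  smooth2 : ContDiff ℝ 2 (uncurry φ₂)
  per1 : ∀ ξ x, φ₁ ξ (x + L) = φ₁ ξ x
  per2 : ∀ ξ x, φ₂ ξ (x + L) = φ₂ ξ x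
  mono1 : ∀ x, Antitone (fun ξ => φ₁ ξ x)
  mono2 : ∀ x, Monotone (fun ξ => φ₂ ξ x)
  pde1 : ∀ t x, dT (Zfun c φ₁) t x =
      dXX (Zfun c φ₁) t x + Zfun c φ₁ t x * f₁ (Zfun c φ₁ t x) x
        - k * Zfun c φ₁ t x * Zfun c φ₂ t x
  pde2 : ∀ t x, dT (Zfun c φ₂) t x =
      d * dXX (Zfun c φ₂) t x + Zfun c φ₂ t x * f₂ (Zfun c φ₂ t x) x
        - α * k * Zfun c φ₁ t x * Zfun c φ₂ t x
  lim_left : ∀ ε > 0, ∃ M, ∀ ξ, ξ ≤ M → ∀ x ∈ Icc (0:ℝ) L,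
      |φ₁ ξ x - a₁| < ε ∧ |φ₂ ξ x| < ε
  lim_right : ∀ ε > 0, ∃ M, ∀ ξ, M ≤ ξ → ∀ x ∈ Icc (0:ℝ) L,
      |φ₁ ξ x| < ε ∧ |φ₂ ξ x - a₂| < ε

/-- A positive pulsating front for the scalar equation `∂ₜ z = δ ∂ₓₓ z + z g(z, x)`
connecting `a` to `0` at speed `s`. -/
structure ScalarFront (L δ a : ℝ) (g : ℝ → ℝ → ℝ) (s : ℝ) (ψ : ℝ → ℝ → ℝ) : Prop where
  smooth : ContDiff ℝ 2 (uncurry ψ)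
  per : ∀ ξ x, ψ ξ (x + L) = ψ ξ x
  pos : ∀ ξ x, 0 < ψ ξ x
  pde : ∀ t x, dT (Zfun s ψ) t x =
      δ * dXX (Zfun s ψ) t x + Zfun s ψ t x * g (Zfun s ψ t x) x
  lim_left : ∀ ε > 0, ∃ M, ∀ ξ, ξ ≤ M → ∀ x ∈ Icc (0:ℝ) L, |ψ ξ x - a| < ε
  lim_right : ∀ ε > 0, ∃ M, ∀ ξ, M ≤ ξ → ∀ x ∈ Icc (0:ℝ) L, |ψ ξ x| < ε

/-- `σ(v) = 1` if `v > 0`, `1/d` if `v < 0` (the value at `0` is irrelevant). -/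
def sigmaFun (d v : ℝ) : ℝ := if 0 < v then 1 else if v < 0 then 1 / d else 0

/-- Extra regularity of a segregated pulsating front (established in the paper):
`z = Zfun s φ` is everywhere differentiable in `x` with `∂ₓ z` continuous on `ℝ²` and
negative on the zero set of `z`, and `∂ₜ z` exists off the zero set and has there the
strict sign of `s`. -/
def FrontRegular (s : ℝ) (φ zt zx : ℝ → ℝ → ℝ) : Prop :=
  (∀ t x, HasDerivAt (fun y => Zfun s φ t y) (zx t x) x) ∧
  Continuous (uncurry zx) ∧
  (∀ t x, Zfun s φ t x = 0 → zx t x < 0) ∧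
  (∀ t x, Zfun s φ t x ≠ 0 → HasDerivAt (fun τ => Zfun s φ τ x) (zt t x) t) ∧
  (0 < s → ∀ t x, Zfun s φ t x ≠ 0 → 0 < zt t x) ∧
  (s < 0 → ∀ t x, Zfun s φ t x ≠ 0 → zt t x < 0)

/-!
Left of `Ξ(t)` the function `z(t, ·)` is positive: it is positive somewhere far to the left
(periodicity and monotonicity of `φ`) and vanishes only at `Ξ(t)`. There `∂ₜz > 0`, so the
equation gives `∂ₓₓz ≥ -z f₁(z/α, x) ≥ -C`, with `C` uniform because `z` is bounded and `f₁`
is continuous and periodic. Hence `∂ₓz + C x` is nondecreasing on `(-∞, Ξ(t))`, and it stays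
below `C Ξ(t)`: otherwise `z(t, ·)` would increase up to its zero while positive. The monotone
limit is `ℓ(t) ≤ 0`, and `ℓ(t) ≥ ∂ₓz(t, x₀) - C (Ξ(t) - x₀)` for a point `x₀` left of all
`Ξ(t)`, `t ∈ [a, b]`, where `∂ₓz` is continuous in `t`.
-/

theorem exists_abs_le_of_continuous_of_periodic {g : ℝ → ℝ → ℝ} {L : ℝ} (hL : 0 < L)
    (hg : Continuous (uncurry g)) (hper : ∀ v x, g v (x + L) = g v x) (M : ℝ) :
    ∃ C, ∀ v x, |v| ≤ M → |g v x| ≤ C := by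
  obtain ⟨C, hC⟩ := (isCompact_Icc.prod isCompact_Icc).bddAbove_image
    (hg.abs.continuousOn (s := Icc (-M) M ×ˢ Icc 0 L))
  refine ⟨C, fun v x hv => ?_⟩
  obtain ⟨y, hy, hxy⟩ := Periodic.exists_mem_Ico₀ (hper v) hL x
  rw [hxy]
  exact hC ⟨(v, y), ⟨abs_le.1 hv, Ico_subset_Icc_self hy⟩, rfl⟩

theorem pos_of_lt_of_unique_zero {u : ℝ → ℝ} {ξ : ℝ} (hu : Continuous u)
    (hzero : ∀ y, u y = 0 → y = ξ) (hleft : ∀ y, ∃ x ≤ y, 0 < u x) {x : ℝ} (hx : x < ξ) :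
    0 < u x := by
  obtain ⟨x', hx'x, hx'⟩ := hleft x
  by_contra! hux
  obtain ⟨c, hc, huc⟩ := intermediate_value_Icc' hx'x hu.continuousOn ⟨hux, hx'.le⟩
  exact (hc.2.trans_lt hx).ne (hzero c huc)

theorem exists_tendsto_nhdsLT_of_second_deriv_ge {u u' u'' : ℝ → ℝ} {ξ C : ℝ} (hC : 0 ≤ C)
    (hu : ContinuousOn u (Iic ξ)) (hu' : ∀ x < ξ, HasDerivAt u (u' x) x)
    (hu'' : ∀ x < ξ, HasDerivAt u' (u'' x) x) (hbound : ∀ x < ξ, -C ≤ u'' x)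
    (hpos : ∀ x < ξ, 0 < u x) (hzero : u ξ = 0) :
    ∃ l, Tendsto u' (𝓝[<] ξ) (𝓝 l) ∧ l ≤ 0 ∧ ∀ x < ξ, u' x - C * (ξ - x) ≤ l := by
  set G : ℝ → ℝ := fun x => u' x + C * x
  have hG_deriv : ∀ x < ξ, HasDerivAt G (u'' x + C) x := fun x hx =>
    ((hu'' x hx).add ((hasDerivAt_id' x).const_mul C)).congr_deriv (by ring)
  have hG_mono : MonotoneOn G (Iio ξ) := by
    refine monotoneOn_of_hasDerivWithinAt_nonneg (f' := fun x => u'' x + C) (convex_Iio ξ)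
      (fun x hx => (hG_deriv x hx).continuousAt.continuousWithinAt)
      (fun x hx => ?_) (fun x hx => ?_) <;> rw [interior_Iio] at hx
    · exact (hG_deriv x hx).hasDerivWithinAt
    · linarith [hbound x hx]
  have hG_le : ∀ x < ξ, G x ≤ C * ξ := by
    intro x hx
    by_contra! hgt
    have hu_mono : MonotoneOn u (Icc x ξ) := by
      refine monotoneOn_of_hasDerivWithinAt_nonneg (f' := u') (convex_Icc x ξ)
        (hu.mono Icc_subset_Iic_self) (fun y hy => ?_) (fun y hy => ?_) <;>
        rw [interior_Icc] at hy
      · exact (hu' y hy.2).hasDerivWithinAt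
      · have hGxy : G x ≤ G y := hG_mono hx hy.2 hy.1.le
        have : C * y ≤ C * ξ := mul_le_mul_of_nonneg_left hy.2.le hC
        linarith
    have := hu_mono (left_mem_Icc.2 hx.le) (right_mem_Icc.2 hx.le) hx.le
    linarith [hpos x hx]
  have hG_bdd : BddAbove (G '' Iio ξ) := ⟨C * ξ, by rintro _ ⟨x, hx, rfl⟩; exact hG_le x hx⟩
  refine ⟨sSup (G '' Iio ξ) - C * ξ, ?_, ?_, fun x hx => ?_⟩
  · have hlim := (hG_mono.tendsto_nhdsLT hG_bdd).sub
      (((continuous_const_mul C).tendsto ξ).mono_left nhdsWithin_le_nhds)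
    simpa [G] using hlim
  · have : sSup (G '' Iio ξ) ≤ C * ξ :=
      csSup_le ⟨G (ξ - 1), ξ - 1, by simp, rfl⟩ (by rintro _ ⟨x, hx, rfl⟩; exact hG_le x hx)
    linarith
  · have : G x ≤ sSup (G '' Iio ξ) := le_csSup hG_bdd ⟨x, hx, rfl⟩
    simp only [G] at this
    linarith

theorem SegFront.exists_le_zfun_pos {L d α a₁ a₂ s : ℝ} {f₁ f₂ φ : ℝ → ℝ → ℝ}
    (hfr : SegFront L d α a₁ a₂ f₁ f₂ s φ) (hL : 0 < L) (t y : ℝ) :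
    ∃ x ≤ y, 0 < Zfun s φ t x := by
  obtain ⟨ξ₀, x₀, hφ⟩ := hfr.pos
  obtain ⟨n, hn⟩ := exists_int_lt (min (y - x₀) (ξ₀ - x₀ + s * t) / L)
  have hnL : n * L < min (y - x₀) (ξ₀ - x₀ + s * t) := (lt_div_iff₀ hL).1 hn
  have hy := hnL.trans_le (min_le_left _ _)
  have hξ := hnL.trans_le (min_le_right _ _)
  refine ⟨x₀ + n * L, by linarith, ?_⟩
  have hper : φ (x₀ + n * L - s * t) (x₀ + n * L) = φ (x₀ + n * L - s * t) x₀ :=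
    Periodic.int_mul (hfr.per _) n x₀
  simp only [Zfun, hper]
  exact hφ.trans_le (hfr.mono x₀ (by linarith))

theorem seg_front_left_trace_of_dx_general
    (L d α a₁ a₂ : ℝ) (hL : 0 < L)
    (f₁ f₂ : ℝ → ℝ → ℝ) (hf₁ : Admissible L f₁ a₁)
    (s : ℝ) (φ : ℝ → ℝ → ℝ)
    (hfr : SegFront L d α a₁ a₂ f₁ f₂ s φ)
    (zt zx : ℝ → ℝ → ℝ)
    (hzt : ∀ t x, Zfun s φ t x ≠ 0 → HasDerivAt (fun τ => Zfun s φ τ x) (zt t x) t)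
    (hztpos : ∀ t x, Zfun s φ t x ≠ 0 → 0 < zt t x)
    (hzx : ∀ t x, Zfun s φ t x ≠ 0 → HasDerivAt (fun y => Zfun s φ t y) (zx t x) x)
    (Ξ : ℝ → ℝ) (hΞc : Continuous Ξ)
    (hΞ : ∀ t, Zfun s φ t (Ξ t) = 0 ∧ ∀ y, Zfun s φ t y = 0 → y = Ξ t) :
    ∃ l : ℝ → ℝ,
      (∀ t, Filter.Tendsto (fun x => zx t x)
          (nhdsWithin (Ξ t) (Iio (Ξ t))) (nhds (l t))) ∧
      (∀ t, l t ≤ 0) ∧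
      (∀ a b : ℝ, BddBelow (l '' Icc a b)) := by
  obtain ⟨zt', zx', zxx', hzt', hzx', hzxx', -, hcx', -, hpde₁, -⟩ := hfr.pde
  have hz_cont : ∀ t, Continuous (Zfun s φ t) := fun t =>
    hfr.cont.comp ((continuous_id.sub continuous_const).prodMk continuous_id)
  obtain ⟨M, hM⟩ := hfr.bdd
  obtain ⟨C, hC⟩ := exists_abs_le_of_continuous_of_periodic hL
    (g := fun v x => v * f₁ (v / α) x)
    (continuous_fst.mul (hf₁.smooth.continuous.comp
      ((continuous_fst.div_const α).prodMk continuous_snd)))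
    (fun v x => by simp only [hf₁.periodic]) M
  have hpos : ∀ t, ∀ x < Ξ t, 0 < Zfun s φ t x := fun t x =>
    pos_of_lt_of_unique_zero (hz_cont t) (hΞ t).2 (hfr.exists_le_zfun_pos hL t)
  have htrace : ∀ t, ∃ l, Tendsto (zx' t) (𝓝[<] Ξ t) (𝓝 l) ∧ l ≤ 0 ∧
      ∀ x < Ξ t, zx' t x - max C 0 * (Ξ t - x) ≤ l := by
    intro t
    refine exists_tendsto_nhdsLT_of_second_deriv_ge (le_max_right C 0)
      (hz_cont t).continuousOn (fun x hx => hzx' t x (hpos t x hx).ne')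
      (fun x hx => hzxx' t x (hpos t x hx).ne') (fun x hx => ?_) (hpos t) (hΞ t).1
    have hz := hpos t x hx
    have hzt_eq : zt t x = zt' t x := (hzt t x hz.ne').unique (hzt' t x hz.ne')
    have hreact : Zfun s φ t x * f₁ (Zfun s φ t x / α) x ≤ C :=
      (abs_le.1 (hC _ x (hM (x - s * t) x))).2
    linarith [hpde₁ t x hz, hztpos t x hz.ne', le_max_left C 0]
  choose l hl_lim hl_nonpos hl_ge using htrace
  refine ⟨l, fun t => (hl_lim t).congr' ?_, hl_nonpos, fun a b => ?_⟩
  · filter_upwards [self_mem_nhdsWithin] with x hx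
    exact (hzx' t x (hpos t x hx).ne').unique (hzx t x (hpos t x hx).ne')
  obtain ⟨m, hm⟩ := (isCompact_Icc (a := a) (b := b)).bddBelow_image hΞc.continuousOn
  have hlt : ∀ t ∈ Icc a b, m - 1 < Ξ t := fun t ht => by linarith [hm ⟨t, ht, rfl⟩]
  have hcont : ContinuousOn (fun t => zx' t (m - 1) - max C 0 * (Ξ t - (m - 1))) (Icc a b) :=
    ((hcx'.comp (Continuous.prodMk_left (m - 1)).continuousOn
      fun t ht => (hpos t _ (hlt t ht)).ne').sub (by fun_prop))
  obtain ⟨B, hB⟩ := isCompact_Icc.bddBelow_image hcont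
  exact ⟨B, by rintro _ ⟨t, ht, rfl⟩; exact (hB ⟨t, ht, rfl⟩).trans (hl_ge t _ (hlt t ht))⟩

/-- existence of the left limit of `∂ₓ z` at the free boundary, its
nonpositivity, and its local uniform lower bound. -/
theorem seg_front_left_trace_of_dx
    (L d α a₁ a₂ : ℝ) (hL : 0 < L) (hd : 0 < d) (hα : 0 < α)
    (f₁ f₂ : ℝ → ℝ → ℝ) (hf₁ : Admissible L f₁ a₁) (hf₂ : Admissible L f₂ a₂)
    (s : ℝ) (hs : 0 < s) (φ : ℝ → ℝ → ℝ)
    (hfr : SegFront L d α a₁ a₂ f₁ f₂ s φ)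
    (zt zx : ℝ → ℝ → ℝ)
    (hzt : ∀ t x, Zfun s φ t x ≠ 0 → HasDerivAt (fun τ => Zfun s φ τ x) (zt t x) t)
    (hztpos : ∀ t x, Zfun s φ t x ≠ 0 → 0 < zt t x)
    (hzx : ∀ t x, Zfun s φ t x ≠ 0 → HasDerivAt (fun y => Zfun s φ t y) (zx t x) x)
    (Ξ : ℝ → ℝ) (hΞc : Continuous Ξ)
    (hΞ : ∀ t, Zfun s φ t (Ξ t) = 0 ∧ ∀ y, Zfun s φ t y = 0 → y = Ξ t) :
    ∃ l : ℝ → ℝ,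
      (∀ t, Filter.Tendsto (fun x => zx t x)
          (nhdsWithin (Ξ t) (Iio (Ξ t))) (nhds (l t))) ∧
      (∀ t, l t ≤ 0) ∧
      (∀ a b : ℝ, BddBelow (l '' Icc a b)) :=
  seg_front_left_trace_of_dx_general L d α a₁ a₂ hL f₁ f₂ hf₁ s φ hfr zt zx hzt hztpos hzx Ξ hΞc hΞ
end
end

section
/- Fix a period L > 0, parameters d, α > 0 and admissible nonlinearities f₁, f₂ with zeros a₁, a₂. Let φ be a regular segregated pulsating front with speed s ≠ 0, set z(t,x) = φ(x − st, x), and assume that the zero set z⁻¹({0}) is the graph {(t, Ξ(t)) : t ∈ ℝ} of a continuous bijection Ξ : ℝ → ℝ. Then the function x ↦ x − s Ξ⁻¹(x) is continuous and L-periodic, and {(x − s Ξ⁻¹(x), x) : x ∈ ℝ} = φ⁻¹({0}). -/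
open MeasureTheory Set Filter Topology Function

noncomputable section

/-! Since `φ ξ x = z((x - ξ)/s, x)` and `z` vanishes exactly on the graph of `Ξ`, the profile
vanishes exactly at `ξ = x - s Ψ x`; periodicity of `φ` in `x` then forces `x - s Ψ x` to be
`L`-periodic. Continuity holds because a continuous bijection of `ℝ` is strictly monotone, so its
inverse is monotone and surjective. -/

theorem Continuous.continuous_of_leftInverse_of_rightInverse {α β : Type*}
    [ConditionallyCompleteLinearOrder α] [DenselyOrdered α] [TopologicalSpace α] [OrderTopology α]
    [LinearOrder β] [TopologicalSpace β] [OrderTopology β] {f : α → β} {g : β → α}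
    (hf : Continuous f) (hl : LeftInverse g f) (hr : RightInverse g f) : Continuous g := by
  rcases hf.strictMono_of_inj hl.injective with hmono | hanti
  · refine Monotone.continuous_of_surjective (fun a b hab => ?_) hl.surjective
    rwa [← hmono.le_iff_le, hr a, hr b]
  · refine Monotone.continuous_of_surjective (β := αᵒᵈ) (f := OrderDual.toDual ∘ g)
      (fun a b hab => ?_) hl.surjective
    show g b ≤ g a
    rwa [← hanti.le_iff_ge, hr a, hr b]

theorem Zfun_div_self {s : ℝ} (hs : s ≠ 0) (φ : ℝ → ℝ → ℝ) (ξ x : ℝ) :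
    Zfun s φ ((x - ξ) / s) x = φ ξ x := by
  simp only [Zfun, mul_div_cancel₀ _ hs, sub_sub_cancel]

theorem profile_eq_zero_iff_of_zero_set_eq_graph {s : ℝ} (hs : s ≠ 0) {φ : ℝ → ℝ → ℝ} {Ξ Ψ : ℝ → ℝ}
    (hl : LeftInverse Ψ Ξ) (hr : RightInverse Ψ Ξ)
    (hgraph : ∀ t x, Zfun s φ t x = 0 ↔ x = Ξ t) (ξ x : ℝ) :
    φ ξ x = 0 ↔ ξ = x - s * Ψ x := by
  have hinv : ∀ t, x = Ξ t ↔ Ψ x = t := fun t => ⟨fun h => h ▸ hl t, fun h => h ▸ (hr x).symm⟩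
  rw [← Zfun_div_self hs φ, hgraph, hinv, eq_div_iff hs]
  constructor <;> intro h <;> linarith

theorem seg_front_free_boundary_periodic_general
    (L d α a₁ a₂ : ℝ)
    (f₁ f₂ : ℝ → ℝ → ℝ)
    (s : ℝ) (hs : s ≠ 0) (φ : ℝ → ℝ → ℝ)
    (hfr : SegFront L d α a₁ a₂ f₁ f₂ s φ)
    (Ξ Ψ : ℝ → ℝ) (hΞc : Continuous Ξ)
    (hleft : Function.LeftInverse Ψ Ξ) (hright : Function.RightInverse Ψ Ξ)
    (hgraph : ∀ t x, Zfun s φ t x = 0 ↔ x = Ξ t) :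
    Continuous (fun x => x - s * Ψ x) ∧
    (∀ x : ℝ, (x + L) - s * Ψ (x + L) = x - s * Ψ x) ∧
    (Set.range fun x : ℝ => ((x - s * Ψ x, x) : ℝ × ℝ))
      = {p : ℝ × ℝ | φ p.1 p.2 = 0} := by
  have hzero := profile_eq_zero_iff_of_zero_set_eq_graph hs hleft hright hgraph
  refine ⟨continuous_id.sub (continuous_const.mul
    (hΞc.continuous_of_leftInverse_of_rightInverse hleft hright)), fun x => ?_, ?_⟩
  · have h : φ (x - s * Ψ x) (x + L) = 0 := by rw [hfr.per, hzero]
    exact ((hzero _ _).1 h).symm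
  · ext ⟨ξ, x⟩
    simp only [mem_range, mem_ofPred_eq, Prod.mk.injEq, hzero]
    constructor
    · rintro ⟨y, rfl, rfl⟩
      rfl
    · rintro rfl
      exact ⟨x, rfl, rfl⟩

/-- the free boundary is located near the line `x = s t + Ξ(0)`:
`x ↦ x - s Ξ⁻¹(x)` is continuous and `L`-periodic, and its graph (in traveling
coordinates) is exactly the zero set of the profile. -/
theorem seg_front_free_boundary_periodic
    (L d α a₁ a₂ : ℝ) (hL : 0 < L) (hd : 0 < d) (hα : 0 < α)
    (f₁ f₂ : ℝ → ℝ → ℝ) (hf₁ : Admissible L f₁ a₁) (hf₂ : Admissible L f₂ a₂)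
    (s : ℝ) (hs : s ≠ 0) (φ : ℝ → ℝ → ℝ)
    (hfr : SegFront L d α a₁ a₂ f₁ f₂ s φ)
    (Ξ Ψ : ℝ → ℝ) (hΞc : Continuous Ξ) (hΞbij : Function.Bijective Ξ)
    (hleft : Function.LeftInverse Ψ Ξ) (hright : Function.RightInverse Ψ Ξ)
    (hgraph : ∀ t x, Zfun s φ t x = 0 ↔ x = Ξ t) :
    Continuous (fun x => x - s * Ψ x) ∧
    (∀ x : ℝ, (x + L) - s * Ψ (x + L) = x - s * Ψ x) ∧
    (Set.range fun x : ℝ => ((x - s * Ψ x, x) : ℝ × ℝ))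
      = {p : ℝ × ℝ | φ p.1 p.2 = 0} :=
  seg_front_free_boundary_periodic_general L d α a₁ a₂ f₁ f₂ s hs φ hfr Ξ Ψ hΞc hleft hright hgraph
end
end

section
/- Fix a period L > 0, parameters d, α > 0 with d ≠ 1, and admissible nonlinearities f₁, f₂ with zeros a₁, a₂. Let φ be a regular segregated pulsating front with speed s ≠ 0 and set z(t,x) = φ(x − st, x). Assume additionally that: z is differentiable on ℝ² with ∂ₜz and ∂ₓz continuous on all of ℝ²; the zero set z⁻¹({0}) is the graph of a C¹ function Ξ : ℝ → ℝ; ∂ₓz(t, Ξ(t)) ≠ 0 for all t; and for each t the one-sided limits of ∂ₓₓz(t, y) as y → Ξ(t)⁻ and y → Ξ(t)⁺ exist. Then for every t ∈ ℝ: Ξ'(t) = (d/(1 − d)) · [ lim_{ε→0⁺} ( ∂ₓₓz(t, Ξ(t) − ε) − ∂ₓₓz(t, Ξ(t) + ε) ) ] / ∂ₓz(t, Ξ(t)). -/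
open MeasureTheory Set Filter Topology Function

noncomputable section

/-!
Left of the free boundary `z > 0` and right of it `z < 0`: periodicity and monotonicity carry
a positive (negative) value of `φ` arbitrarily far to the left (right), and the intermediate
value theorem forbids any other sign change. Letting `x → Ξ(t)∓` in the two equations, where
`z → 0` and `∂ₜz` is continuous, gives `∂ₜz = ∂ₓₓz⁻` and `∂ₜz = d ∂ₓₓz⁺` on the boundary.
Since both partial derivatives of `z` are continuous, `z` is differentiable on `ℝ²`, and
differentiating `z(t, Ξ(t)) = 0` gives `∂ₜz + ∂ₓz Ξ' = 0`. Eliminating `∂ₜz` gives the formula.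
-/

theorem IsPreconnected.pos_of_forall_ne_zero {X : Type*} [TopologicalSpace X] {S : Set X}
    {g : X → ℝ} (hS : IsPreconnected S) (hg : ContinuousOn g S) (h0 : ∀ y ∈ S, g y ≠ 0)
    {a b : X} (ha : a ∈ S) (hga : 0 < g a) (hb : b ∈ S) : 0 < g b := by
  by_contra! hgb
  obtain ⟨c, hc, hgc⟩ := hS.intermediate_value hb ha hg ⟨hgb, hga.le⟩
  exact h0 c hc hgc

theorem tendsto_const_sub_nhdsGT_zero (a : ℝ) :
    Tendsto (fun ε => a - ε) (𝓝[>] 0) (𝓝[<] a) := by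
  refine tendsto_nhdsWithin_iff.2 ⟨?_, eventually_nhdsWithin_of_forall fun ε hε => ?_⟩
  · simpa using ((continuous_sub_left a).tendsto 0).mono_left nhdsWithin_le_nhds
  · exact sub_lt_self a hε

theorem tendsto_const_add_nhdsGT_zero (a : ℝ) :
    Tendsto (fun ε => a + ε) (𝓝[>] 0) (𝓝[>] a) := by
  refine tendsto_nhdsWithin_iff.2 ⟨?_, eventually_nhdsWithin_of_forall fun ε hε => ?_⟩
  · simpa using ((continuous_const_add a).tendsto 0).mono_left nhdsWithin_le_nhds
  · exact lt_add_of_pos_right a hε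

theorem eq_mul_of_eventuallyEq_add_mul {l : Filter ℝ} [l.NeBot] {x₀ A B c : ℝ}
    (hl : l ≤ 𝓝 x₀) {g h z : ℝ → ℝ} {F : ℝ → ℝ → ℝ} (hF : Continuous (uncurry F))
    (hg : Tendsto g l (𝓝 A)) (hh : Tendsto h l (𝓝 B)) (hz : Tendsto z l (𝓝 0))
    (heq : ∀ᶠ y in l, g y = c * h y + z y * F (z y) y) : A = c * B := by
  have hFz : Tendsto (fun y => F (z y) y) l (𝓝 (F 0 x₀)) :=
    (hF.tendsto (0, x₀)).comp (hz.prodMk_nhds hl)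
  have hrhs := (hh.const_mul c).add (hz.mul hFz)
  rw [zero_mul, add_zero] at hrhs
  exact tendsto_nhds_unique hg (hrhs.congr' (heq.mono fun _ hy => hy.symm))

open ContinuousLinearMap in
theorem HasDerivAt.comp_of_continuousAt_partials {u ut ux : ℝ → ℝ → ℝ} {γ : ℝ → ℝ}
    {t γ' : ℝ} (hut : ∀ᶠ p in 𝓝 (t, γ t), HasDerivAt (u · p.2) (ut p.1 p.2) p.1)
    (hux : ∀ᶠ p in 𝓝 (t, γ t), HasDerivAt (u p.1 ·) (ux p.1 p.2) p.2)
    (hutc : ContinuousAt (uncurry ut) (t, γ t)) (huxc : ContinuousAt (uncurry ux) (t, γ t))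
    (hγ : HasDerivAt γ γ' t) :
    HasDerivAt (fun τ => u τ (γ τ)) (ut t (γ t) + ux t (γ t) * γ') t := by
  have hu := hasStrictFDerivAt_uncurry_coprod (𝕜 := ℝ)
    (f₁ := fun a b => toSpanSingleton ℝ (ut a b)) (f₂ := fun a b => toSpanSingleton ℝ (ux a b))
    hut hux ((toSpanSingletonCLE (𝕜 := ℝ)).continuous.continuousAt.comp hutc)
    ((toSpanSingletonCLE (𝕜 := ℝ)).continuous.continuousAt.comp huxc)
  refine (hu.hasFDerivAt.comp_hasDerivAt t ((hasDerivAt_id t).prodMk hγ)).congr_deriv ?_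
  simp [Function.HasUncurry.uncurry, mul_comm]

section SegFront

variable {L d α a₁ a₂ s : ℝ} {f₁ f₂ φ : ℝ → ℝ → ℝ}

theorem SegFront.continuous_zfun (hfr : SegFront L d α a₁ a₂ f₁ f₂ s φ) (t : ℝ) :
    Continuous (Zfun s φ t) :=
  hfr.cont.comp (by fun_prop : Continuous fun y : ℝ => (y - s * t, y))

theorem SegFront.exists_zfun_pos_lt (hL : 0 < L) (hfr : SegFront L d α a₁ a₂ f₁ f₂ s φ)
    (t c : ℝ) : ∃ y < c, 0 < Zfun s φ t y := by
  obtain ⟨ξ, x, hξx⟩ := hfr.pos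
  obtain ⟨n, hn⟩ := exists_int_lt ((min c (ξ + s * t) - x) / L)
  have hnL : n * L < min c (ξ + s * t) - x := (lt_div_iff₀ hL).1 hn
  refine ⟨x + n * L, by linarith [min_le_left c (ξ + s * t)], ?_⟩
  have hper : Periodic (φ (x + n * L - s * t)) L := hfr.per _
  calc 0 < φ ξ x := hξx
    _ ≤ φ (x + n * L - s * t) x := hfr.mono x (by linarith [min_le_right c (ξ + s * t)])
    _ = Zfun s φ t (x + n * L) := ((hper.int_mul n) x).symm

theorem SegFront.exists_zfun_neg_gt (hL : 0 < L) (hfr : SegFront L d α a₁ a₂ f₁ f₂ s φ)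
    (t c : ℝ) : ∃ y > c, Zfun s φ t y < 0 := by
  obtain ⟨ξ, x, hξx⟩ := hfr.neg
  obtain ⟨n, hn⟩ := exists_int_gt ((max c (ξ + s * t) - x) / L)
  have hnL : max c (ξ + s * t) - x < n * L := (div_lt_iff₀ hL).1 hn
  refine ⟨x + n * L, by linarith [le_max_left c (ξ + s * t)], ?_⟩
  have hper : Periodic (φ (x + n * L - s * t)) L := hfr.per _
  calc Zfun s φ t (x + n * L) = φ (x + n * L - s * t) x := (hper.int_mul n) x
    _ ≤ φ ξ x := hfr.mono x (by linarith [le_max_right c (ξ + s * t)])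
    _ < 0 := hξx

theorem SegFront.zfun_pos_of_lt (hL : 0 < L) (hfr : SegFront L d α a₁ a₂ f₁ f₂ s φ)
    {t X : ℝ} (hzero : ∀ x, Zfun s φ t x = 0 ↔ x = X) {y : ℝ} (hy : y < X) :
    0 < Zfun s φ t y := by
  obtain ⟨a, ha, hza⟩ := hfr.exists_zfun_pos_lt hL t X
  exact isPreconnected_Iio.pos_of_forall_ne_zero (hfr.continuous_zfun t).continuousOn
    (fun x hx h => (hzero x).1 h |>.not_lt hx) ha hza hy

theorem SegFront.zfun_neg_of_gt (hL : 0 < L) (hfr : SegFront L d α a₁ a₂ f₁ f₂ s φ)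
    {t X : ℝ} (hzero : ∀ x, Zfun s φ t x = 0 ↔ x = X) {y : ℝ} (hy : X < y) :
    Zfun s φ t y < 0 := by
  obtain ⟨a, ha, hza⟩ := hfr.exists_zfun_neg_gt hL t X
  have := isPreconnected_Ioi.pos_of_forall_ne_zero (g := fun x => -Zfun s φ t x)
    (hfr.continuous_zfun t).neg.continuousOn
    (fun x hx h => (hzero x).1 (neg_eq_zero.1 h) |>.not_gt hx) ha (neg_pos.2 hza) hy
  exact neg_pos.1 this

theorem SegFront.pde_of_hasDerivAt (hfr : SegFront L d α a₁ a₂ f₁ f₂ s φ)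
    {zt zx zxx : ℝ → ℝ → ℝ}
    (hzt : ∀ t x, Zfun s φ t x ≠ 0 → HasDerivAt (fun τ => Zfun s φ τ x) (zt t x) t)
    (hzx : ∀ t x, Zfun s φ t x ≠ 0 → HasDerivAt (fun y => Zfun s φ t y) (zx t x) x)
    (hzxx : ∀ t x, Zfun s φ t x ≠ 0 → HasDerivAt (fun y => zx t y) (zxx t x) x) :
    (∀ t x, 0 < Zfun s φ t x →
      zt t x = zxx t x + Zfun s φ t x * f₁ (Zfun s φ t x / α) x) ∧
    (∀ t x, Zfun s φ t x < 0 →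
      zt t x = d * zxx t x + Zfun s φ t x * f₂ (-(Zfun s φ t x) / d) x) := by
  obtain ⟨zt', zx', zxx', hzt', hzx', hzxx', -, -, -, hpos, hneg⟩ := hfr.pde
  have hzt_eq : ∀ t x, Zfun s φ t x ≠ 0 → zt' t x = zt t x :=
    fun t x h => (hzt' t x h).unique (hzt t x h)
  have hzxx_eq : ∀ t x, Zfun s φ t x ≠ 0 → zxx' t x = zxx t x := by
    intro t x h
    refine ((hzxx' t x h).congr_of_eventuallyEq ?_).unique (hzxx t x h)
    filter_upwards [(isOpen_ne_fun (hfr.continuous_zfun t) continuous_const).mem_nhds h]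
      with y hy using ((hzx' t y hy).unique (hzx t y hy)).symm
  refine ⟨fun t x h => ?_, fun t x h => ?_⟩
  · rw [← hzt_eq t x h.ne', ← hzxx_eq t x h.ne']; exact hpos t x h
  · rw [← hzt_eq t x h.ne, ← hzxx_eq t x h.ne]; exact hneg t x h

end SegFront

theorem seg_front_free_boundary_derivative_formula_general
    (L d α a₁ a₂ : ℝ) (hL : 0 < L) (hd1 : d ≠ 1)
    (f₁ f₂ : ℝ → ℝ → ℝ) (hf₁ : Admissible L f₁ a₁) (hf₂ : Admissible L f₂ a₂)
    (s : ℝ) (φ : ℝ → ℝ → ℝ)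
    (hfr : SegFront L d α a₁ a₂ f₁ f₂ s φ)
    (zt zx zxx : ℝ → ℝ → ℝ)
    (hzt : ∀ t x, HasDerivAt (fun τ => Zfun s φ τ x) (zt t x) t)
    (hzx : ∀ t x, HasDerivAt (fun y => Zfun s φ t y) (zx t x) x)
    (hztc : Continuous (uncurry zt))
    (hzxc : Continuous (uncurry zx))
    (hzxx : ∀ t x, Zfun s φ t x ≠ 0 → HasDerivAt (fun y => zx t y) (zxx t x) x)
    (Ξ Ξ' : ℝ → ℝ) (hΞ : ∀ t, HasDerivAt Ξ (Ξ' t) t)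
    (hgraph : ∀ t x, Zfun s φ t x = 0 ↔ x = Ξ t)
    (hzxne : ∀ t, zx t (Ξ t) ≠ 0)
    (hlim : ∀ t, (∃ l, Filter.Tendsto (fun y => zxx t y)
          (nhdsWithin (Ξ t) (Iio (Ξ t))) (nhds l))
        ∧ (∃ l, Filter.Tendsto (fun y => zxx t y)
          (nhdsWithin (Ξ t) (Ioi (Ξ t))) (nhds l))) :
    ∀ t : ℝ, ∃ J : ℝ,
      Filter.Tendsto (fun ε => zxx t (Ξ t - ε) - zxx t (Ξ t + ε))
        (nhdsWithin 0 (Ioi (0 : ℝ))) (nhds J) ∧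
      Ξ' t = d / (1 - d) * J / zx t (Ξ t) := by
  intro t
  obtain ⟨⟨lm, hlm⟩, ⟨lp, hlp⟩⟩ := hlim t
  obtain ⟨hpde_pos, hpde_neg⟩ :=
    hfr.pde_of_hasDerivAt (fun t x _ => hzt t x) (fun t x _ => hzx t x) hzxx
  have hz : Tendsto (Zfun s φ t) (𝓝 (Ξ t)) (𝓝 0) := by
    simpa [(hgraph t _).2 rfl] using (hfr.continuous_zfun t).tendsto (Ξ t)
  have hzt_cont : Tendsto (zt t) (𝓝 (Ξ t)) (𝓝 (zt t (Ξ t))) :=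
    (hztc.comp (Continuous.prodMk_right t)).tendsto _
  have hleft : zt t (Ξ t) = 1 * lm :=
    eq_mul_of_eventuallyEq_add_mul nhdsWithin_le_nhds (F := fun u x => f₁ (u / α) x)
      (hf₁.smooth.continuous.comp (f := fun p : ℝ × ℝ => (p.1 / α, p.2)) (by fun_prop)) (hzt_cont.mono_left nhdsWithin_le_nhds) hlm
      (hz.mono_left nhdsWithin_le_nhds) (eventually_nhdsWithin_of_forall fun y hy => by
        rw [one_mul]; exact hpde_pos t y (hfr.zfun_pos_of_lt hL (hgraph t) hy))
  have hright : zt t (Ξ t) = d * lp :=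
    eq_mul_of_eventuallyEq_add_mul nhdsWithin_le_nhds (F := fun u x => f₂ (-u / d) x)
      (hf₂.smooth.continuous.comp (f := fun p : ℝ × ℝ => (-p.1 / d, p.2)) (by fun_prop)) (hzt_cont.mono_left nhdsWithin_le_nhds) hlp
      (hz.mono_left nhdsWithin_le_nhds) (eventually_nhdsWithin_of_forall fun y hy =>
        hpde_neg t y (hfr.zfun_neg_of_gt hL (hgraph t) hy))
  have hchain : zt t (Ξ t) + zx t (Ξ t) * Ξ' t = 0 :=
    (HasDerivAt.comp_of_continuousAt_partials (.of_forall fun p => hzt p.1 p.2)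
      (.of_forall fun p => hzx p.1 p.2) hztc.continuousAt hzxc.continuousAt (hΞ t)).unique
      ((hasDerivAt_const t 0).congr_of_eventuallyEq (.of_forall fun τ => (hgraph τ _).2 rfl))
  refine ⟨lm - lp, (hlm.comp (tendsto_const_sub_nhdsGT_zero _)).sub
    (hlp.comp (tendsto_const_add_nhdsGT_zero _)), ?_⟩
  have h1d : 1 - d ≠ 0 := sub_ne_zero.2 hd1.symm
  field_simp [hzxne t]
  linear_combination (1 - d) * hchain + d * hleft - hright

/-- the formula relating `Ξ'` to the jump of `∂ₓₓ z` across the free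
boundary, when `d ≠ 1`. -/
theorem seg_front_free_boundary_derivative_formula
    (L d α a₁ a₂ : ℝ) (hL : 0 < L) (hd : 0 < d) (hα : 0 < α) (hd1 : d ≠ 1)
    (f₁ f₂ : ℝ → ℝ → ℝ) (hf₁ : Admissible L f₁ a₁) (hf₂ : Admissible L f₂ a₂)
    (s : ℝ) (hs : s ≠ 0) (φ : ℝ → ℝ → ℝ)
    (hfr : SegFront L d α a₁ a₂ f₁ f₂ s φ)
    (zt zx zxx : ℝ → ℝ → ℝ)
    (hzt : ∀ t x, HasDerivAt (fun τ => Zfun s φ τ x) (zt t x) t)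
    (hzx : ∀ t x, HasDerivAt (fun y => Zfun s φ t y) (zx t x) x)
    (hztc : Continuous (uncurry zt))
    (hzxc : Continuous (uncurry zx))
    (hzxx : ∀ t x, Zfun s φ t x ≠ 0 → HasDerivAt (fun y => zx t y) (zxx t x) x)
    (Ξ Ξ' : ℝ → ℝ) (hΞ : ∀ t, HasDerivAt Ξ (Ξ' t) t) (hΞ'c : Continuous Ξ')
    (hgraph : ∀ t x, Zfun s φ t x = 0 ↔ x = Ξ t)
    (hzxne : ∀ t, zx t (Ξ t) ≠ 0)
    (hlim : ∀ t, (∃ l, Filter.Tendsto (fun y => zxx t y)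
          (nhdsWithin (Ξ t) (Iio (Ξ t))) (nhds l))
        ∧ (∃ l, Filter.Tendsto (fun y => zxx t y)
          (nhdsWithin (Ξ t) (Ioi (Ξ t))) (nhds l))) :
    ∀ t : ℝ, ∃ J : ℝ,
      Filter.Tendsto (fun ε => zxx t (Ξ t - ε) - zxx t (Ξ t + ε))
        (nhdsWithin 0 (Ioi (0 : ℝ))) (nhds J) ∧
      Ξ' t = d / (1 - d) * J / zx t (Ξ t) :=
  seg_front_free_boundary_derivative_formula_general L d α a₁ a₂ hL hd1 f₁ f₂ hf₁ hf₂ s φ hfr zt zx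
    zxx hzt hzx hztc hzxc hzxx Ξ Ξ' hΞ hgraph hzxne hlim
end
end

section
/- Fix a period L > 0, parameters d, α > 0 and admissible nonlinearities f₁, f₂ with zeros a₁, a₂. Every segregated stationary equilibrium e satisfies −d a₂ < e(x) < α a₁ for all x ∈ ℝ. -/
open MeasureTheory Set Filter Topology Function

noncomputable section

/-!
Where `e > α a₁` the equation gives `e'' = -f₁(e/α, x) e ≥ 0`, so `e` is convex there. Since
`e(x + nL)` decreases in `n` and `e` is negative somewhere, `e ≤ 0` at arbitrarily large `x`;
a point with `e > α a₁` then yields a point `c` with `e(c) > α a₁` and `e'(c) < 0`, and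
convexity propagates this to the left: `e` stays above its tangent at `c` on `(-∞, c]`, which
contradicts boundedness. Hence `e ≤ α a₁`. On `0 < e ≤ α a₁`, the `C¹` bound
`f₁(v, x) ≤ C (a₁ - v)` gives `|e''| ≤ K (α a₁ - e)`; at a point where `e = α a₁` also
`e' = 0`, and Grönwall keeps `e ≡ α a₁` up to the next point where `e ≤ 0`, which is absurd.
The lower bound is the upper bound for `y ↦ -e(-y)`, which solves `-u'' = (1/d) f₂(u/d, -y) u`
where it is positive, with level `d a₂`.
-/

lemma frequently_atTop_nonpos_of_add_le {u : ℝ → ℝ} {L : ℝ} (hL : 0 < L)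
    (hshift : ∀ x, u (x + L) ≤ u x) {x₁ : ℝ} (hx₁ : u x₁ < 0) : ∃ᶠ y in atTop, u y ≤ 0 := by
  have hanti : Antitone fun n : ℕ => u (x₁ + n * L) :=
    antitone_nat_of_succ_le fun n => by simpa [add_mul, add_assoc] using hshift (x₁ + n * L)
  refine frequently_atTop.2 fun x₀ => ?_
  obtain ⟨n, hn⟩ := exists_nat_ge ((x₀ - x₁) / L)
  refine ⟨x₁ + n * L, by linarith [(div_le_iff₀ hL).1 hn], ?_⟩
  exact (hanti n.zero_le).trans (by simpa using hx₁.le)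

lemma exists_gt_forall_mem_Ico_lt {u : ℝ → ℝ} (hu : Continuous u) {x₀ y b : ℝ}
    (hx₀ : b < u x₀) (hy : x₀ ≤ y) (huy : u y ≤ b) :
    ∃ q, x₀ < q ∧ u q ≤ b ∧ ∀ z ∈ Ico x₀ q, b < u z := by
  obtain ⟨q, ⟨⟨hxq, hqy⟩, huq⟩, hleast⟩ :=
    (isCompact_Icc.inter_right (isClosed_le hu continuous_const)).exists_isLeast
      ⟨y, ⟨hy, le_rfl⟩, huy⟩
  refine ⟨q, hxq.lt_of_ne ?_, huq, fun z hz => not_le.1 fun huz => ?_⟩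
  · rintro rfl
    exact hx₀.not_ge huq
  · exact hz.2.not_ge (hleast ⟨⟨hz.1, hz.2.le.trans hqy⟩, huz⟩)

lemma exists_lt_forall_mem_Ioc_lt {u : ℝ → ℝ} (hu : Continuous u) {x₀ y b : ℝ}
    (hx₀ : b < u x₀) (hy : y ≤ x₀) (huy : u y ≤ b) :
    ∃ p, p < x₀ ∧ u p ≤ b ∧ ∀ z ∈ Ioc p x₀, b < u z := by
  obtain ⟨p, ⟨⟨hyp, hpx⟩, hup⟩, hgreatest⟩ :=
    (isCompact_Icc.inter_right (isClosed_le hu continuous_const)).exists_isGreatest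
      ⟨y, ⟨le_rfl, hy⟩, huy⟩
  refine ⟨p, hpx.lt_of_ne ?_, hup, fun z hz => not_le.1 fun huz => ?_⟩
  · rintro rfl
    exact hx₀.not_ge hup
  · exact hz.1.not_ge (hgreatest ⟨⟨hyp.trans hz.1.le, hz.2⟩, huz⟩)

lemma add_deriv_mul_sub_le_of_deriv2_nonneg {u : ℝ → ℝ} (hu : Differentiable ℝ u)
    (hu' : Differentiable ℝ (deriv u)) {z c : ℝ} (hzc : z ≤ c)
    (h2 : ∀ x ∈ Ioo z c, 0 ≤ deriv (deriv u) x) :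
    u c + deriv u c * (z - c) ≤ u z := by
  have hmono : MonotoneOn (deriv u) (Icc z c) :=
    monotoneOn_of_deriv_nonneg (convex_Icc z c) hu'.continuous.continuousOn
      hu'.differentiableOn (by rwa [interior_Icc])
  have := (convex_Icc z c).image_sub_le_mul_sub_of_deriv_le hu.continuous.continuousOn
    hu.differentiableOn (fun x hx => hmono (interior_subset hx) ⟨hzc, le_rfl⟩
      (interior_subset hx).2) z ⟨le_rfl, hzc⟩ c ⟨hzc, le_rfl⟩ hzc
  linarith

lemma le_of_deriv2_nonneg_of_lt {u : ℝ → ℝ} (hu : Differentiable ℝ u)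
    (hu' : Differentiable ℝ (deriv u)) {b : ℝ} (hbdd : BddAbove (range u))
    (hconv : ∀ x, b < u x → 0 ≤ deriv (deriv u) x) (hfreq : ∃ᶠ y in atTop, u y ≤ b)
    (x : ℝ) : u x ≤ b := by
  by_contra! hx
  obtain ⟨y, hxy, huy⟩ := frequently_atTop.1 hfreq x
  obtain ⟨q, hxq, huq, hgt⟩ := exists_gt_forall_mem_Ico_lt hu.continuous hx hxy huy
  obtain ⟨c, hc, hslope⟩ := exists_deriv_eq_slope u hxq hu.continuous.continuousOn
    hu.differentiableOn
  have hdc : deriv u c < 0 := by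
    rw [hslope]
    exact div_neg_of_neg_of_pos (by linarith) (by linarith)
  have huc : b < u c := hgt c ⟨hc.1.le, hc.2⟩
  have hleft : ∀ z ≤ c, b < u z := by
    intro z hz
    by_contra! huz
    obtain ⟨p, hpc, hup, hgt'⟩ := exists_lt_forall_mem_Ioc_lt hu.continuous huc hz huz
    have := add_deriv_mul_sub_le_of_deriv2_nonneg hu hu' hpc.le
      fun w hw => hconv w (hgt' w ⟨hw.1, hw.2.le⟩)
    nlinarith [mul_pos_of_neg_of_neg hdc (sub_neg.2 hpc)]
  obtain ⟨M, hM⟩ := hbdd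
  have hucM : u c ≤ M := hM ⟨c, rfl⟩
  set z := c + (M + 1 - u c) / deriv u c
  have hz : z ≤ c := add_le_of_nonpos_right (div_nonpos_of_nonneg_of_nonpos (by linarith) hdc.le)
  have htangent := add_deriv_mul_sub_le_of_deriv2_nonneg hu hu' hz
    fun w hw => hconv w (hleft w hw.2.le)
  have : deriv u c * (z - c) = M + 1 - u c := by
    simp only [z, add_sub_cancel_left, mul_div_cancel₀ _ hdc.ne]
  linarith [hM ⟨z, rfl⟩]

lemma eq_zero_of_abs_deriv2_le_mul_abs {w : ℝ → ℝ} (hw : Differentiable ℝ w)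
    (hw' : Differentiable ℝ (deriv w)) {K a b : ℝ} (ha : w a = 0) (ha' : deriv w a = 0)
    (bound : ∀ x ∈ Ico a b, |deriv (deriv w) x| ≤ K * |w x|) :
    ∀ x ∈ Icc a b, w x = 0 := by
  have hK : 0 ≤ max K 1 := le_max_of_le_right zero_le_one
  have key := eq_zero_of_abs_deriv_le_mul_abs_self_of_eq_zero_right
    (f := fun x => (w x, deriv w x)) (f' := fun x => (deriv w x, deriv (deriv w) x))
    (K := max K 1) (a := a) (b := b) (hw.continuous.prodMk hw'.continuous).continuousOn
    (fun x _ => ((hw x).hasDerivAt.prodMk (hw' x).hasDerivAt).hasDerivWithinAt)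
    (by simp [ha, ha']) fun x hx => by
      simp only [Prod.norm_def, Real.norm_eq_abs]
      refine max_le ?_ ?_
      · exact (le_max_right _ _).trans (le_mul_of_one_le_left (by positivity) (le_max_right _ _))
      · exact (bound x hx).trans
          (mul_le_mul (le_max_left _ _) (le_max_left _ _) (abs_nonneg _) hK)
  exact fun x hx => congrArg Prod.fst (key x hx)

lemma lt_of_le_of_abs_deriv2_le {u : ℝ → ℝ} (hu : Differentiable ℝ u)
    (hu' : Differentiable ℝ (deriv u)) {b K : ℝ} (hb : 0 < b) (hle : ∀ x, u x ≤ b)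
    (bound : ∀ x, 0 < u x → |deriv (deriv u) x| ≤ K * (b - u x))
    (hfreq : ∃ᶠ y in atTop, u y ≤ 0) (x : ℝ) : u x < b := by
  refine (hle x).lt_of_ne fun hx => ?_
  have hmax : IsMaxOn u univ x := fun y _ => hx ▸ hle y
  obtain ⟨y, hxy, huy⟩ := frequently_atTop.1 hfreq x
  obtain ⟨q, hxq, huq, hpos⟩ := exists_gt_forall_mem_Ico_lt hu.continuous (hx ▸ hb) hxy huy
  have hderiv : deriv (fun y => u y - b) = deriv u := deriv_sub_const_fun b
  have hzero := eq_zero_of_abs_deriv2_le_mul_abs (w := fun y => u y - b) (K := K)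
    (hu.sub_const b) (hderiv ▸ hu') (sub_eq_zero.2 hx)
    (hderiv ▸ (hmax.isLocalMax univ_mem).deriv_eq_zero) (fun s hs => by
      rw [hderiv, abs_of_nonpos (sub_nonpos.2 (hle s)), neg_sub]
      exact bound s (hpos s hs)) q ⟨hxq.le, le_rfl⟩
  linarith [sub_eq_zero.1 hzero]

namespace Admissible

variable {L a : ℝ} {f : ℝ → ℝ → ℝ}

lemma nonneg_of_le (hf : Admissible L f a) {u : ℝ} (hu : u ≤ a) (x : ℝ) : 0 ≤ f u x :=
  hf.zero_root x ▸ (hf.strict_anti x).antitone hu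

lemma neg_of_lt (hf : Admissible L f a) {u : ℝ} (hu : a < u) (x : ℝ) : f u x < 0 :=
  hf.zero_root x ▸ hf.strict_anti x hu

lemma exists_le_mul_sub (hf : Admissible L f a) (hL : 0 < L) :
    ∃ C, ∀ u x, 0 ≤ u → u ≤ a → f u x ≤ C * (a - u) := by
  obtain ⟨C, hC⟩ := (hf.smooth.contDiffOn (s := Icc 0 a ×ˢ Icc 0 L)).exists_lipschitzOnWith
    one_ne_zero ((convex_Icc _ _).prod (convex_Icc _ _)) (isCompact_Icc.prod isCompact_Icc)
  refine ⟨C, fun u x hu hua => ?_⟩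
  obtain ⟨y, hy, hxy⟩ := Periodic.exists_mem_Ico₀ (fun x => hf.periodic u x) hL x
  have hdist := hC.dist_le_mul (u, y) ⟨⟨hu, hua⟩, Ico_subset_Icc_self hy⟩
    (a, y) ⟨⟨hf.zero_pos.le, le_rfl⟩, Ico_subset_Icc_self hy⟩
  simp only [uncurry_apply_pair, dist_prod_same_right, Real.dist_eq, hf.zero_root, sub_zero,
    abs_of_nonpos (sub_nonpos.2 hua), neg_sub] at hdist
  rw [hxy]
  exact (le_abs_self _).trans hdist

lemma lt_mul_of_neg_deriv2_eq (hf : Admissible L f a) (hL : 0 < L) {k s : ℝ} (hk : 0 < k)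
    (hs : 0 < s) {u τ : ℝ → ℝ} (hu : Differentiable ℝ u) (hu' : Differentiable ℝ (deriv u))
    (hbdd : BddAbove (range u))
    (hode : ∀ x, 0 < u x → -deriv (deriv u) x = k * f (u x / s) (τ x) * u x)
    (hfreq : ∃ᶠ y in atTop, u y ≤ 0) (x : ℝ) : u x < s * a := by
  obtain ⟨C, hC⟩ := hf.exists_le_mul_sub hL
  have hsa : 0 < s * a := mul_pos hs hf.zero_pos
  have hle : ∀ y, u y ≤ s * a := by
    refine le_of_deriv2_nonneg_of_lt hu hu' hbdd (fun y hy => ?_)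
      (hfreq.mono fun y hy => hy.trans hsa.le)
    have hneg := hf.neg_of_lt ((lt_div_iff₀' hs).2 hy) (τ y)
    have := hode y (hsa.trans hy)
    nlinarith [mul_pos hk (hsa.trans hy)]
  refine lt_of_le_of_abs_deriv2_le hu hu' hsa (K := k * C * a) hle (fun y hy => ?_) hfreq x
  have hus : u y / s ≤ a := (div_le_iff₀' hs).2 (hle y)
  have hfC := hC (u y / s) (τ y) (by positivity) hus
  calc |deriv (deriv u) y| = k * f (u y / s) (τ y) * u y := by
        rw [← abs_neg, hode y hy, abs_of_nonneg
          (mul_nonneg (mul_nonneg hk.le (hf.nonneg_of_le hus (τ y))) hy.le)]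
    _ ≤ k * (C * (a - u y / s)) * u y := by gcongr
    _ ≤ k * (C * (a - u y / s)) * (s * a) := mul_le_mul_of_nonneg_left (hle y)
        (mul_nonneg hk.le ((hf.nonneg_of_le hus (τ y)).trans hfC))
    _ = k * C * a * (s * a - u y) := by field_simp

end Admissible

namespace SegEquilibrium

variable {L d α : ℝ} {f₁ f₂ : ℝ → ℝ → ℝ} {e : ℝ → ℝ}

lemma add_period_le (he : SegEquilibrium L d α f₁ f₂ e) (x : ℝ) : e (x + L) ≤ e x := by
  simpa using he.mono x zero_le_one

lemma differentiable (he : SegEquilibrium L d α f₁ f₂ e) : Differentiable ℝ e :=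
  he.smooth.differentiable (by norm_num)

lemma differentiable_deriv (he : SegEquilibrium L d α f₁ f₂ e) : Differentiable ℝ (deriv e) := by
  simpa using he.smooth.differentiable_iteratedDeriv 1 (by norm_num)

lemma bddAbove_range (he : SegEquilibrium L d α f₁ f₂ e) : BddAbove (range e) := by
  obtain ⟨M, hM⟩ := he.bdd
  exact ⟨M, forall_mem_range.2 fun x => (le_abs_self _).trans (hM x)⟩

lemma neg_deriv2_of_pos (he : SegEquilibrium L d α f₁ f₂ e) {x : ℝ} (hx : 0 < e x) :
    -deriv (deriv e) x = f₁ (e x / α) x * e x := by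
  rw [he.ode, eta, max_eq_left hx.le, min_eq_right hx.le]
  ring

lemma deriv2_of_neg (he : SegEquilibrium L d α f₁ f₂ e) {x : ℝ} (hx : e x < 0) :
    deriv (deriv e) x = 1 / d * f₂ (-e x / d) x * -e x := by
  have := he.ode x
  rw [eta, max_eq_right hx.le, min_eq_left hx.le] at this
  linarith

lemma lt_mul_of_admissible (he : SegEquilibrium L d α f₁ f₂ e) (hL : 0 < L) (hα : 0 < α)
    {a₁ : ℝ} (hf₁ : Admissible L f₁ a₁) (x : ℝ) : e x < α * a₁ :=
  have ⟨_, hx₁⟩ := he.neg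
  hf₁.lt_mul_of_neg_deriv2_eq hL one_pos hα (τ := id) he.differentiable he.differentiable_deriv
    he.bddAbove_range (fun _ hx => by rw [one_mul]; exact he.neg_deriv2_of_pos hx)
    (frequently_atTop_nonpos_of_add_le hL he.add_period_le hx₁) x

lemma neg_mul_lt_of_admissible (he : SegEquilibrium L d α f₁ f₂ e) (hL : 0 < L) (hd : 0 < d)
    {a₂ : ℝ} (hf₂ : Admissible L f₂ a₂) (x : ℝ) : -(d * a₂) < e x := by
  have hderiv : deriv (fun y => -e (-y)) = fun y => deriv e (-y) :=
    funext fun y => by rw [deriv.fun_neg, deriv_comp_neg, neg_neg]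
  obtain ⟨x₁, hx₁⟩ := he.pos
  obtain ⟨M, hM⟩ := he.bdd
  have := hf₂.lt_mul_of_neg_deriv2_eq hL (one_div_pos.2 hd) hd (τ := Neg.neg)
    (u := fun y => -e (-y)) (he.differentiable.comp differentiable_neg).neg
    (hderiv ▸ he.differentiable_deriv.comp differentiable_neg)
    ⟨M, forall_mem_range.2 fun y => (neg_le_abs _).trans (hM _)⟩
    (fun y hy => by rw [hderiv, deriv_comp_neg, neg_neg, he.deriv2_of_neg (neg_pos.1 hy)])
    (frequently_atTop_nonpos_of_add_le (x₁ := -x₁) hL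
      (fun y => by simpa [neg_add_eq_sub] using he.add_period_le (-y - L)) (by simpa)) (-x)
  exact neg_lt.1 (by simpa using this)

end SegEquilibrium

/-- `L^∞` bounds for segregated stationary equilibria:
`-d a₂ < e < α a₁`. -/
theorem seg_equilibrium_linfty_bounds
    (L d α a₁ a₂ : ℝ) (hL : 0 < L) (hd : 0 < d) (hα : 0 < α)
    (f₁ f₂ : ℝ → ℝ → ℝ) (hf₁ : Admissible L f₁ a₁) (hf₂ : Admissible L f₂ a₂)
    (e : ℝ → ℝ) (he : SegEquilibrium L d α f₁ f₂ e) :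
    ∀ x : ℝ, -(d * a₂) < e x ∧ e x < α * a₁ :=
  fun x => ⟨he.neg_mul_lt_of_admissible hL hd hf₂ x, he.lt_mul_of_admissible hL hα hf₁ x⟩
end
end

section
/- Fix a period L > 0, parameters d, α > 0 and admissible nonlinearities f₁, f₂ with zeros a₁, a₂. Let e be a segregated stationary equilibrium. If e⁻¹({0}) has a minimum, then sup_{x∈[−(n+1)L, −nL]} ( |e(x) − α a₁| + |e'(x)| + |e''(x)| ) → 0 as n → +∞. If e⁻¹({0}) has a maximum, then sup_{x∈[nL, (n+1)L]} ( |e(x) + d a₂| + |e'(x)| + |e''(x)| ) → 0 as n → +∞. -/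
/-!
To the left of its zero set the equilibrium is positive (a negative value there would, by the
monotonicity of `e(x - nL)` in `n`, force a zero further left), so there it solves
`-u'' = G(u, x)` with `G(z, x) = z f₁(z/α, x)` monostable: positive on `(0, a)`, negative above
`a`. The translates `u(· - nL)` increase to an `L`-periodic limit `E`, which is Lipschitz because
`u''`, hence `u'`, is bounded. If `E > a` at a maximum point of `E`, then by Dini's theorem the
translates are uniformly convex on a fixed neighbourhood of it, so the second difference of `E`
there is positive, which is absurd; symmetrically at a minimum point with `E < a`. Hence `E ≡ a`,
Dini gives `u → a` at `-∞`, the equation gives `u'' → 0`, and interpolation between `u` and `u''`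
gives `u' → 0`. The right end is the same argument for `-e(-x)`.
-/

open MeasureTheory Set Filter Topology Function

noncomputable section

lemma eventually_forall_sub_mul_lt {L : ℝ} (hL : 0 < L) (b c : ℝ) :
    ∀ᶠ n : ℕ in atTop, ∀ y ≤ b, y - n * L < c := by
  filter_upwards
    [(tendsto_natCast_atTop_atTop.atTop_mul_const hL).eventually_gt_atTop (b - c)] with n hn y hy
  linarith

lemma eventually_atBot_of_eventually_forall_Icc {L : ℝ} (hL : 0 < L) {p : ℝ → Prop}
    (h : ∀ᶠ n : ℕ in atTop, ∀ y ∈ Icc 0 L, p (y - n * L)) : ∀ᶠ x in atBot, p x := by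
  obtain ⟨N, hN⟩ := eventually_atTop.1 h
  filter_upwards [eventually_le_atBot (-(N * L))] with x hx
  have hx0 : 0 ≤ -x / L := div_nonneg (by nlinarith [(N.cast_nonneg : (0:ℝ) ≤ N)]) hL.le
  set n := ⌈-x / L⌉₊
  have h₁ : -x ≤ n * L := (div_le_iff₀ hL).1 (Nat.le_ceil _)
  have h₂ : n * L < -x + L := by
    have := (Nat.ceil_lt_add_one hx0)
    rw [← sub_lt_iff_lt_add, lt_div_iff₀ hL] at this
    linarith
  have hNn : N ≤ n := Nat.cast_le.1 <| ((le_div_iff₀ hL).2 (by linarith)).trans (Nat.le_ceil _)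
  simpa using hN n hNn (x + n * L) ⟨by linarith, by linarith⟩

lemma exists_forall_Icc_of_eventually_atTop {L : ℝ} (hL : 0 < L) {p : ℝ → Prop}
    (h : ∀ᶠ x in atTop, p x) :
    ∃ N : ℕ, ∀ n : ℕ, N ≤ n → ∀ x ∈ Icc ((n : ℝ) * L) (((n : ℝ) + 1) * L), p x := by
  obtain ⟨R, hR⟩ := eventually_atTop.1 h
  obtain ⟨N, hN⟩ := exists_nat_ge (R / L)
  refine ⟨N, fun n hn x hx => hR x ?_⟩
  have : R ≤ N * L := (div_le_iff₀ hL).1 hN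
  nlinarith [hx.1, (Nat.cast_le.2 hn : (N : ℝ) ≤ n)]

lemma exists_forall_Icc_of_eventually_atBot {L : ℝ} (hL : 0 < L) {p : ℝ → Prop}
    (h : ∀ᶠ x in atBot, p x) :
    ∃ N : ℕ, ∀ n : ℕ, N ≤ n → ∀ x ∈ Icc (-((n : ℝ) + 1) * L) (-(n : ℝ) * L), p x := by
  obtain ⟨N, hN⟩ :=
    exists_forall_Icc_of_eventually_atTop hL (tendsto_neg_atTop_atBot.eventually h)
  exact ⟨N, fun n hn x hx => by
    simpa using hN n hn (-x) ⟨by linarith [hx.2], by linarith [hx.1]⟩⟩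

lemma eventually_abs_add_abs_add_abs_lt {α : Type*} {l : Filter α} {f g h : α → ℝ} {a : ℝ}
    (hf : Tendsto f l (𝓝 a)) (hg : Tendsto g l (𝓝 0)) (hh : Tendsto h l (𝓝 0)) {ε : ℝ}
    (hε : 0 < ε) : ∀ᶠ x in l, |f x - a| + |g x| + |h x| < ε := by
  have : Tendsto (fun x => |f x - a| + |g x| + |h x|) l (𝓝 0) := by
    simpa using (((hf.sub_const a).abs.add hg.abs).add hh.abs)
  exact this.eventually (gt_mem_nhds hε)

lemma exists_forall_Icc_of_eventually_nhds {p : ℝ → Prop} {x : ℝ} (h : ∀ᶠ y in 𝓝 x, p y) :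
    ∃ r > 0, ∀ y ∈ Icc (x - r) (x + r), p y := by
  obtain ⟨r, hr, hp⟩ := Metric.nhds_basis_closedBall.eventually_iff.1 h
  exact ⟨r, hr, fun y hy => hp (by rwa [Real.closedBall_eq_Icc])⟩

lemma le_second_diff {u : ℝ → ℝ} (hu : Differentiable ℝ u) (hu' : Differentiable ℝ (deriv u))
    {x r κ : ℝ} (hr : 0 ≤ r) (h : ∀ y ∈ Icc (x - r) (x + r), κ ≤ deriv (deriv u) y) :
    κ * r ^ 2 ≤ u (x + r) + u (x - r) - 2 * u x := by
  have hconv : ConvexOn ℝ (Icc (x - r) (x + r)) (fun y => u y - κ / 2 * y ^ 2) := by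
    refine convexOn_of_hasDerivWithinAt2_nonneg (convex_Icc _ _)
      (f' := fun y => deriv u y - κ * y) (f'' := fun y => deriv (deriv u) y - κ)
      (hu.continuous.sub (by fun_prop)).continuousOn (fun y _ => ?_) (fun y _ => ?_)
      (fun y hy => ?_)
    · exact (((hu y).hasDerivAt).sub ((hasDerivAt_pow 2 y).const_mul (κ / 2))
        |>.congr_deriv (by ring)).hasDerivWithinAt
    · exact (((hu' y).hasDerivAt).sub ((hasDerivAt_id y).const_mul κ)
        |>.congr_deriv (by simp)).hasDerivWithinAt
    · rw [interior_Icc] at hy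
      exact sub_nonneg.2 (h y (Ioo_subset_Icc_self hy))
  have := hconv.2 (x := x - r) (y := x + r) ⟨le_rfl, by linarith⟩ ⟨by linarith, le_rfl⟩
    (by norm_num : (0:ℝ) ≤ 1 / 2) (by norm_num : (0:ℝ) ≤ 1 / 2) (by norm_num)
  simp only [smul_eq_mul] at this
  have hx : 1 / 2 * (x - r) + 1 / 2 * (x + r) = x := by ring
  rw [hx] at this
  linarith

lemma abs_deriv_le_of_forall_Icc {u : ℝ → ℝ} (hu : Differentiable ℝ u)
    (hu' : Differentiable ℝ (deriv u)) {x a A B : ℝ}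
    (hA : ∀ y ∈ Icc x (x + 1), |u y - a| ≤ A)
    (hB : ∀ y ∈ Icc x (x + 1), |deriv (deriv u) y| ≤ B) :
    |deriv u x| ≤ 2 * A + B := by
  obtain ⟨ξ, hξ, hslope⟩ := exists_deriv_eq_slope u (lt_add_one x) hu.continuous.continuousOn
    (hu.differentiableOn.mono Ioo_subset_Icc_self)
  have hx : x ∈ Icc x (x + 1) := ⟨le_rfl, by linarith⟩
  have hξ' : ξ ∈ Icc x (x + 1) := Ioo_subset_Icc_self hξ
  have hslope_le : |deriv u ξ| ≤ 2 * A := by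
    rw [hslope, add_sub_cancel_left, div_one,
      show u (x + 1) - u x = (u (x + 1) - a) - (u x - a) by ring]
    linarith [abs_sub (u (x + 1) - a) (u x - a), hA _ ⟨by linarith, le_rfl⟩, hA x hx]
  have hmvt : |deriv u ξ - deriv u x| ≤ B * |ξ - x| :=
    (convex_Icc x (x + 1)).norm_image_sub_le_of_norm_deriv_le (fun y _ => hu' y) hB hx hξ'
  have hξx : |ξ - x| ≤ 1 := by rw [abs_le]; constructor <;> linarith [hξ.1, hξ.2]
  have hB0 : 0 ≤ B := (abs_nonneg _).trans (hB x hx)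
  calc |deriv u x| ≤ |deriv u ξ| + |deriv u ξ - deriv u x| := by
        linarith [abs_sub_abs_le_abs_sub (deriv u x) (deriv u ξ),
          abs_sub_comm (deriv u x) (deriv u ξ)]
    _ ≤ 2 * A + B * 1 := add_le_add hslope_le (hmvt.trans (by gcongr))
    _ = 2 * A + B := by ring

section Periodic

variable {L : ℝ} {F : ℝ → ℝ → ℝ}

lemma exists_forall_le_of_periodic (hL : 0 < L) (hF : Continuous (uncurry F))
    (hper : ∀ z, Periodic (F z) L) {K : Set ℝ} (hK : IsCompact K) (hne : K.Nonempty) :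
    ∃ z₀ ∈ K, ∃ x₀, ∀ z ∈ K, ∀ x, F z₀ x₀ ≤ F z x := by
  obtain ⟨p, hp, hmin⟩ := (hK.prod isCompact_Icc).exists_isMinOn
    (hne.prod (nonempty_Icc.2 hL.le)) hF.continuousOn
  refine ⟨p.1, hp.1, p.2, fun z hz x => ?_⟩
  obtain ⟨y, hy, hxy⟩ := (hper z).exists_mem_Ico₀ hL x
  rw [hxy]
  exact hmin (a := (z, y)) ⟨hz, Ico_subset_Icc_self hy⟩

lemma tendsto_apply_of_periodic (hL : 0 < L) (hF : Continuous (uncurry F))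
    (hper : ∀ z, Periodic (F z) L) {a : ℝ} (hroot : ∀ x, F a x = 0)
    {ι : Type*} {l : Filter ι} {v w : ι → ℝ} (hv : Tendsto v l (𝓝 a)) :
    Tendsto (fun t => F (v t) (w t)) l (𝓝 0) := by
  rw [Metric.tendsto_nhds]
  intro ε hε
  have hnear : ∀ᶠ z in 𝓝 a, ∀ y ∈ Icc 0 L, dist (F z y) 0 < ε :=
    isCompact_Icc.eventually_forall_of_forall_eventually fun y _ =>
      ((hF.tendsto (a, y)).eventually (Metric.ball_mem_nhds _ hε)).mono fun z hz => by
        simpa [hroot, uncurry] using hz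
  filter_upwards [hv hnear] with t ht
  obtain ⟨y, hy, hwy⟩ := (hper (v t)).exists_mem_Ico₀ hL (w t)
  rw [hwy]
  exact ht y (Ico_subset_Icc_self hy)

end Periodic

structure IsMonostable (L a : ℝ) (G : ℝ → ℝ → ℝ) : Prop where
  continuous : Continuous (uncurry G)
  periodic : ∀ z, Periodic (G z) L
  pos_of_lt : ∀ z x, 0 < z → z < a → 0 < G z x
  neg_of_gt : ∀ z x, a < z → G z x < 0
  root : ∀ x, G a x = 0

lemma IsMonostable.div_const {L a γ : ℝ} {G : ℝ → ℝ → ℝ} (hG : IsMonostable L a G)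
    (hγ : 0 < γ) : IsMonostable L a (fun z x => G z x / γ) where
  continuous := hG.continuous.div_const γ
  periodic z x := by simp only [hG.periodic z x]
  pos_of_lt z x h₀ ha := div_pos (hG.pos_of_lt z x h₀ ha) hγ
  neg_of_gt z x ha := div_neg_of_neg_of_pos (hG.neg_of_gt z x ha) hγ
  root x := by simp [hG.root x]

lemma Admissible.comp_neg {L a : ℝ} {f : ℝ → ℝ → ℝ} (hf : Admissible L f a) :
    Admissible L (fun u x => f u (-x)) a where
  smooth := hf.smooth.comp (contDiff_fst.prodMk contDiff_snd.neg)
  periodic u x := by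
    rw [← hf.periodic u (-(x + L))]
    ring_nf
  pos_at_zero := let ⟨m, hm, h⟩ := hf.pos_at_zero; ⟨m, hm, fun x => h (-x)⟩
  strict_anti x := hf.strict_anti (-x)
  zero_pos := hf.zero_pos
  zero_root x := hf.zero_root (-x)

lemma Admissible.isMonostable {L a β : ℝ} {f : ℝ → ℝ → ℝ} (hf : Admissible L f a)
    (hβ : 0 < β) : IsMonostable L (β * a) (fun z x => f (z / β) x * z) where
  continuous := (hf.smooth.continuous.comp (by fun_prop : Continuous
    fun p : ℝ × ℝ => (p.1 / β, p.2))).mul continuous_fst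
  periodic z x := by simp only [hf.periodic]
  pos_of_lt z x h₀ ha := by
    refine mul_pos ?_ h₀
    rw [← hf.zero_root x]
    exact hf.strict_anti x ((div_lt_iff₀ hβ).2 (by linarith))
  neg_of_gt z x ha := by
    refine mul_neg_of_neg_of_pos ?_ (by nlinarith [hf.zero_pos])
    rw [← hf.zero_root x]
    exact hf.strict_anti x ((lt_div_iff₀ hβ).2 (by linarith))
  root x := by simp [mul_div_cancel_left₀ a hβ.ne', hf.zero_root x]

def shiftSup (L : ℝ) (u : ℝ → ℝ) (x : ℝ) : ℝ := ⨆ n : ℕ, u (x - n * L)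

section ShiftSup

variable {L : ℝ} {u : ℝ → ℝ}

lemma tendsto_shiftSup (hbdd : BddAbove (range u))
    (hmono : ∀ x, Monotone fun n : ℕ => u (x - n * L)) (x : ℝ) :
    Tendsto (fun n : ℕ => u (x - n * L)) atTop (𝓝 (shiftSup L u x)) :=
  tendsto_atTop_ciSup (hmono x) (hbdd.mono (range_subset_iff.2 fun _ => mem_range_self _))

lemma periodic_shiftSup (hbdd : BddAbove (range u))
    (hmono : ∀ x, Monotone fun n : ℕ => u (x - n * L)) : Periodic (shiftSup L u) L := by
  intro x
  refine tendsto_nhds_unique ((tendsto_shiftSup hbdd hmono (x + L)).comp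
    (tendsto_add_atTop_nat 1)) ?_
  convert tendsto_shiftSup hbdd hmono x using 2 with n
  simp only [comp_apply]
  push_cast
  ring_nf

lemma LipschitzOnWith.shiftSup (hL : 0 < L) (hbdd : BddAbove (range u))
    (hmono : ∀ x, Monotone fun n : ℕ => u (x - n * L)) {K : NNReal} {c : ℝ}
    (hu : LipschitzOnWith K u (Iio c)) : LipschitzWith K (shiftSup L u) := by
  refine LipschitzWith.of_dist_le_mul fun s t => le_of_tendsto
    ((tendsto_shiftSup hbdd hmono s).dist (tendsto_shiftSup hbdd hmono t)) ?_
  filter_upwards [eventually_forall_sub_mul_lt hL (max s t) c] with n hn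
  simpa [Real.dist_eq] using
    hu.dist_le_mul _ (hn s (le_max_left _ _)) _ (hn t (le_max_right _ _))

lemma tendstoUniformlyOn_shiftSup (hu : Continuous u) (hbdd : BddAbove (range u))
    (hmono : ∀ x, Monotone fun n : ℕ => u (x - n * L)) (hE : Continuous (shiftSup L u))
    {s : Set ℝ} (hs : IsCompact s) :
    TendstoUniformlyOn (fun (n : ℕ) y => u (y - n * L)) (shiftSup L u) atTop s :=
  Monotone.tendstoUniformlyOn_of_forall_tendsto hs
    (fun _ => (hu.comp (continuous_sub_right _)).continuousOn) (fun y _ => hmono y)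
    hE.continuousOn fun y _ => tendsto_shiftSup hbdd hmono y

lemma le_second_diff_of_tendsto {E : ℝ → ℝ} (hu : Differentiable ℝ u)
    (hu' : Differentiable ℝ (deriv u))
    (hE : ∀ y, Tendsto (fun n : ℕ => u (y - n * L)) atTop (𝓝 (E y))) {x r κ : ℝ} (hr : 0 ≤ r)
    (h : ∀ᶠ n : ℕ in atTop, ∀ y ∈ Icc (x - r) (x + r), κ ≤ deriv (deriv u) (y - n * L)) :
    κ * r ^ 2 ≤ E (x + r) + E (x - r) - 2 * E x := by
  refine ge_of_tendsto (((hE (x + r)).add (hE (x - r))).sub ((hE x).const_mul 2)) ?_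
  filter_upwards [h] with n hn
  have := le_second_diff hu hu' (x := x - n * L) hr fun y hy => by
    simpa using hn (y + n * L) ⟨by linarith [hy.1], by linarith [hy.2]⟩
  rwa [show x - n * L + r = x + r - n * L by ring, show x - n * L - r = x - r - n * L by ring]
    at this

lemma second_diff_le_of_tendsto {E : ℝ → ℝ} (hu : Differentiable ℝ u)
    (hu' : Differentiable ℝ (deriv u))
    (hE : ∀ y, Tendsto (fun n : ℕ => u (y - n * L)) atTop (𝓝 (E y))) {x r κ : ℝ} (hr : 0 ≤ r)
    (h : ∀ᶠ n : ℕ in atTop, ∀ y ∈ Icc (x - r) (x + r), deriv (deriv u) (y - n * L) ≤ κ) :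
    E (x + r) + E (x - r) - 2 * E x ≤ κ * r ^ 2 := by
  have := le_second_diff_of_tendsto (u := -u) (E := -E) (κ := -κ) hu.neg
    (by simpa using hu'.neg) (fun y => (hE y).neg) hr
    (h.mono fun n hn y hy => by simpa using hn y hy)
  simp only [Pi.neg_apply] at this
  linarith

end ShiftSup

lemma exists_forall_lt_pos {L : ℝ} {u : ℝ → ℝ} (hL : 0 < L) (hu : Continuous u)
    (hmono : ∀ x, Monotone fun n : ℕ => u (x - n * L)) (hpos : ∃ x, 0 < u x)
    (hzero : BddBelow {y | u y = 0}) : ∃ c, ∀ x < c, 0 < u x := by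
  obtain ⟨m, hm⟩ := hzero
  obtain ⟨x₀, hx₀⟩ := hpos
  refine ⟨m, fun x hx => ?_⟩
  obtain ⟨n, hn⟩ := (eventually_forall_sub_mul_lt hL x₀ x).exists
  have hshift : 0 < u (x₀ - n * L) := hx₀.trans_le (by simpa using hmono x₀ (Nat.zero_le n))
  by_contra! hx0
  obtain ⟨z, hz, hz0⟩ :=
    intermediate_value_Icc' (hn x₀ le_rfl).le hu.continuousOn ⟨hx0, hshift.le⟩
  exact (hz.2.trans_lt hx).not_ge (hm hz0)

section Tail

variable {L a c M : ℝ} {G : ℝ → ℝ → ℝ} {u : ℝ → ℝ}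

lemma lipschitzOnWith_of_ode (hL : 0 < L) (hGc : Continuous (uncurry G))
    (hGp : ∀ z, Periodic (G z) L) (hu : Differentiable ℝ u) (hu' : Differentiable ℝ (deriv u))
    (hbdd : ∀ x, |u x| ≤ M) (hode : ∀ x < c, -deriv (deriv u) x = G (u x) x) :
    ∃ K, LipschitzOnWith K u (Iio (c - 1)) := by
  have hM : 0 ≤ M := (abs_nonneg _).trans (hbdd 0)
  obtain ⟨z₀, -, x₀, hmax⟩ := exists_forall_le_of_periodic (F := fun z x => -|G z x|) hL
    hGc.abs.neg (fun z x => by simp only [hGp z x]) isCompact_Icc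
    (nonempty_Icc.2 (by linarith : -M ≤ M))
  have hu'' : ∀ x < c, |deriv (deriv u) x| ≤ |G z₀ x₀| := fun x hx => by
    rw [← abs_neg, hode x hx]
    linarith [hmax (u x) (abs_le.1 (hbdd x)) x]
  refine ⟨(2 * M + |G z₀ x₀|).toNNReal,
    (convex_Iio _).lipschitzOnWith_of_nnnorm_deriv_le (fun x _ => hu x) fun x hx => ?_⟩
  rw [Real.le_toNNReal_iff_coe_le (by positivity), coe_nnnorm, Real.norm_eq_abs]
  exact abs_deriv_le_of_forall_Icc hu hu' (a := 0) (fun y _ => by simpa using hbdd y)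
    fun y hy => hu'' y (by linarith [hy.2, mem_Iio.1 hx])

lemma shiftSup_le_of_ode (hL : 0 < L) (hG : IsMonostable L a G) (hu : Differentiable ℝ u)
    (hu' : Differentiable ℝ (deriv u)) (hbdd : ∀ x, |u x| ≤ M)
    (hmono : ∀ x, Monotone fun n : ℕ => u (x - n * L))
    (hode : ∀ x < c, -deriv (deriv u) x = G (u x) x) (hE : Continuous (shiftSup L u)) (x : ℝ) :
    shiftSup L u x ≤ a := by
  have hbdd' : BddAbove (range u) := ⟨M, by rintro _ ⟨y, rfl⟩; exact (abs_le.1 (hbdd y)).2⟩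
  have hlim := tendsto_shiftSup hbdd' hmono
  obtain ⟨_, ⟨x₀, rfl⟩, hmax⟩ := ((periodic_shiftSup hbdd' hmono).compact_of_continuous
    hL.ne' hE).exists_isGreatest (range_nonempty _)
  refine (hmax ⟨x, rfl⟩).trans (not_lt.1 fun ha => ?_)
  set E := shiftSup L u
  obtain ⟨b, hab, hbE⟩ := exists_between ha
  obtain ⟨r, hr, hEr⟩ :=
    exists_forall_Icc_of_eventually_nhds (hE.continuousAt.eventually (lt_mem_nhds hbE))
  have hunif := tendstoUniformlyOn_shiftSup hu.continuous hbdd' hmono hE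
    (isCompact_Icc (a := x₀ - r) (b := x₀ + r))
  have hbM : (a + b) / 2 ≤ M := by
    linarith [le_of_tendsto' (hlim x₀) fun n => (abs_le.1 (hbdd (x₀ - n * L))).2]
  obtain ⟨z₀, hz₀, x₁, hmin⟩ := exists_forall_le_of_periodic (F := fun z x => -G z x) hL
    hG.continuous.neg (fun z x => by simp only [hG.periodic z x]) isCompact_Icc
    (nonempty_Icc.2 hbM)
  have hκ : 0 < -G z₀ x₁ := neg_pos.2 (hG.neg_of_gt _ _ (by linarith [hz₀.1]))
  have hconvex : ∀ᶠ n : ℕ in atTop, ∀ y ∈ Icc (x₀ - r) (x₀ + r),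
      -G z₀ x₁ ≤ deriv (deriv u) (y - n * L) := by
    filter_upwards [Metric.tendstoUniformlyOn_iff.1 hunif ((b - a) / 2) (by linarith),
      eventually_forall_sub_mul_lt hL (x₀ + r) c] with n hn hc y hy
    have hlow : (a + b) / 2 ≤ u (y - n * L) := by
      linarith [hEr y hy, (abs_lt.1 (Real.dist_eq _ _ ▸ hn y hy)).2]
    have hup : u (y - n * L) ≤ M := (abs_le.1 (hbdd _)).2
    rw [← neg_neg (deriv (deriv u) _), hode _ (hc y hy.2), (hG.periodic _).sub_nat_mul_eq]
    exact hmin _ ⟨hlow, hup⟩ y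
  have := le_second_diff_of_tendsto hu hu' hlim hr.le hconvex
  nlinarith [hmax ⟨x₀ + r, rfl⟩, hmax ⟨x₀ - r, rfl⟩, mul_pos hκ (pow_pos hr 2)]

lemma le_shiftSup_of_ode (hL : 0 < L) (hG : IsMonostable L a G) (hu : Differentiable ℝ u)
    (hu' : Differentiable ℝ (deriv u)) (hbdd : BddAbove (range u))
    (hmono : ∀ x, Monotone fun n : ℕ => u (x - n * L)) (hpos : ∀ x < c, 0 < u x)
    (hode : ∀ x < c, -deriv (deriv u) x = G (u x) x) (hE : Continuous (shiftSup L u)) (x : ℝ) :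
    a ≤ shiftSup L u x := by
  have hlim := tendsto_shiftSup hbdd hmono
  obtain ⟨_, ⟨x₀, rfl⟩, hmin⟩ := ((periodic_shiftSup hbdd hmono).compact_of_continuous
    hL.ne' hE).exists_isLeast (range_nonempty _)
  refine le_trans (not_lt.1 fun ha => ?_) (hmin ⟨x, rfl⟩)
  set E := shiftSup L u
  have hE₀ : 0 < E x₀ := by
    obtain ⟨n, hn⟩ := (eventually_forall_sub_mul_lt hL x₀ c).exists
    exact (hpos _ (hn x₀ le_rfl)).trans_le ((hmono x₀).ge_of_tendsto (hlim x₀) n)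
  obtain ⟨b, hEb, hba⟩ := exists_between ha
  obtain ⟨r, hr, hEr⟩ :=
    exists_forall_Icc_of_eventually_nhds (hE.continuousAt.eventually (gt_mem_nhds hEb))
  have hunif := tendstoUniformlyOn_shiftSup hu.continuous hbdd hmono hE
    (isCompact_Icc (a := x₀ - r) (b := x₀ + r))
  obtain ⟨z₀, hz₀, x₁, hmin'⟩ := exists_forall_le_of_periodic hL hG.continuous hG.periodic
    isCompact_Icc (nonempty_Icc.2 (by linarith : E x₀ / 2 ≤ b))
  have hκ : 0 < G z₀ x₁ := hG.pos_of_lt _ _ (by linarith [hz₀.1]) (by linarith [hz₀.2])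
  have hconcave : ∀ᶠ n : ℕ in atTop, ∀ y ∈ Icc (x₀ - r) (x₀ + r),
      deriv (deriv u) (y - n * L) ≤ -G z₀ x₁ := by
    filter_upwards [Metric.tendstoUniformlyOn_iff.1 hunif (E x₀ / 2) (by linarith),
      eventually_forall_sub_mul_lt hL (x₀ + r) c] with n hn hc y hy
    have hlow : E x₀ / 2 ≤ u (y - n * L) := by
      linarith [hmin ⟨y, rfl⟩, (abs_lt.1 (Real.dist_eq _ _ ▸ hn y hy)).2]
    have hup : u (y - n * L) ≤ b := ((hmono y).ge_of_tendsto (hlim y) n).trans (hEr y hy).le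
    rw [← neg_neg (deriv (deriv u) _), hode _ (hc y hy.2), (hG.periodic _).sub_nat_mul_eq]
    exact neg_le_neg (hmin' _ ⟨hlow, hup⟩ y)
  have := second_diff_le_of_tendsto hu hu' hlim hr.le hconcave
  nlinarith [hmin ⟨x₀ + r, rfl⟩, hmin ⟨x₀ - r, rfl⟩, mul_pos hκ (pow_pos hr 2)]

end Tail

lemma tendsto_atBot_of_shiftSup_eq {L a : ℝ} {u : ℝ → ℝ} (hL : 0 < L) (hu : Continuous u)
    (hbdd : BddAbove (range u)) (hmono : ∀ x, Monotone fun n : ℕ => u (x - n * L))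
    (h : ∀ x, shiftSup L u x = a) : Tendsto u atBot (𝓝 a) := by
  have hE : shiftSup L u = fun _ => a := funext h
  have hunif := tendstoUniformlyOn_shiftSup hu hbdd hmono (hE ▸ continuous_const)
    (isCompact_Icc (a := 0) (b := L))
  rw [hE] at hunif
  rw [Metric.tendsto_nhds]
  intro ε hε
  exact eventually_atBot_of_eventually_forall_Icc hL
    ((Metric.tendstoUniformlyOn_iff.1 hunif ε hε).mono fun n hn y hy => by
      rw [dist_comm]; exact hn y hy)

lemma tendsto_deriv_atBot_of_tendsto {u : ℝ → ℝ} {a : ℝ} (hu : Differentiable ℝ u)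
    (hu' : Differentiable ℝ (deriv u)) (h₀ : Tendsto u atBot (𝓝 a))
    (h₂ : Tendsto (deriv (deriv u)) atBot (𝓝 0)) : Tendsto (deriv u) atBot (𝓝 0) := by
  rw [Metric.tendsto_nhds]
  intro ε hε
  have hsmall : ∀ᶠ y in atBot, |u y - a| ≤ ε / 4 ∧ |deriv (deriv u) y| ≤ ε / 4 := by
    have hε4 : 0 < ε / 4 := by positivity
    filter_upwards [h₀.eventually (Metric.closedBall_mem_nhds a hε4),
      h₂.eventually (Metric.closedBall_mem_nhds 0 hε4)] with y h₀y h₂y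
    simpa [Real.dist_eq] using And.intro h₀y h₂y
  obtain ⟨R, hR⟩ := eventually_atBot.1 hsmall
  filter_upwards [eventually_le_atBot (R - 1)] with x hx
  have := abs_deriv_le_of_forall_Icc hu hu' (x := x)
    (fun y hy => (hR y (by linarith [hy.2])).1) fun y hy => (hR y (by linarith [hy.2])).2
  rw [Real.dist_eq, sub_zero]
  linarith

theorem tendsto_atBot_of_ode {L a : ℝ} {G : ℝ → ℝ → ℝ} {u : ℝ → ℝ} (hL : 0 < L)
    (hG : IsMonostable L a G) (hu : Differentiable ℝ u) (hu' : Differentiable ℝ (deriv u))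
    (hbdd : ∃ M, ∀ x, |u x| ≤ M) (hmono : ∀ x, Monotone fun n : ℕ => u (x - n * L))
    (hpos : ∃ x, 0 < u x) (hzero : BddBelow {y | u y = 0})
    (hode : ∀ x, 0 < u x → -deriv (deriv u) x = G (u x) x) :
    Tendsto u atBot (𝓝 a) ∧ Tendsto (deriv u) atBot (𝓝 0) ∧
      Tendsto (deriv (deriv u)) atBot (𝓝 0) := by
  obtain ⟨M, hM⟩ := hbdd
  have hbdd : BddAbove (range u) := ⟨M, by rintro _ ⟨y, rfl⟩; exact (abs_le.1 (hM y)).2⟩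
  obtain ⟨c, hc⟩ := exists_forall_lt_pos hL hu.continuous hmono hpos hzero
  have hode' : ∀ x < c, -deriv (deriv u) x = G (u x) x := fun x hx => hode x (hc x hx)
  obtain ⟨K, hK⟩ := lipschitzOnWith_of_ode hL hG.continuous hG.periodic hu hu' hM hode'
  have hE := (hK.shiftSup hL hbdd hmono).continuous
  have h₀ : Tendsto u atBot (𝓝 a) := tendsto_atBot_of_shiftSup_eq hL hu.continuous hbdd hmono
    fun x => le_antisymm (shiftSup_le_of_ode hL hG hu hu' hM hmono hode' hE x)
      (le_shiftSup_of_ode hL hG hu hu' hbdd hmono hc hode' hE x)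
  have h₂ : Tendsto (deriv (deriv u)) atBot (𝓝 0) := by
    have h := (tendsto_apply_of_periodic hL hG.continuous hG.periodic hG.root h₀ (w := id)).neg
    rw [neg_zero] at h
    refine h.congr' ?_
    filter_upwards [eventually_lt_atBot c] with x hx
    simp [← hode' x hx]
  exact ⟨h₀, tendsto_deriv_atBot_of_tendsto hu hu' h₀ h₂, h₂⟩

lemma monotone_sub_mul_of_antitone_add_mul {L : ℝ} {u : ℝ → ℝ}
    (h : ∀ x, Antitone fun n : ℕ => u (x + n * L)) (x : ℝ) :
    Monotone fun n : ℕ => u (x - n * L) :=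
  monotone_nat_of_le_succ fun n => by
    simpa [add_mul, sub_add_eq_sub_sub] using h (x - (n + 1) * L) (Nat.zero_le 1)

namespace SegEquilibrium

variable {L d α : ℝ} {f₁ f₂ : ℝ → ℝ → ℝ} {e : ℝ → ℝ}

theorem tendsto_atBot {a₁ : ℝ} (he : SegEquilibrium L d α f₁ f₂ e) (hL : 0 < L) (hα : 0 < α)
    (hf₁ : Admissible L f₁ a₁) (hzero : BddBelow {y | e y = 0}) :
    Tendsto e atBot (𝓝 (α * a₁)) ∧ Tendsto (deriv e) atBot (𝓝 0) ∧
      Tendsto (deriv (deriv e)) atBot (𝓝 0) :=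
  tendsto_atBot_of_ode hL (hf₁.isMonostable hα) he.differentiable he.differentiable_deriv he.bdd
    (monotone_sub_mul_of_antitone_add_mul he.mono) he.pos hzero fun x hx => by
      rw [he.ode, eta, max_eq_left hx.le, min_eq_right hx.le]
      ring

theorem tendsto_atTop {a₂ : ℝ} (he : SegEquilibrium L d α f₁ f₂ e) (hL : 0 < L) (hd : 0 < d)
    (hf₂ : Admissible L f₂ a₂) (hzero : BddAbove {y | e y = 0}) :
    Tendsto e atTop (𝓝 (-(d * a₂))) ∧ Tendsto (deriv e) atTop (𝓝 0) ∧
      Tendsto (deriv (deriv e)) atTop (𝓝 0) := by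
  set u : ℝ → ℝ := fun y => -e (-y)
  have hu₁ : deriv u = fun y => deriv e (-y) := by funext y; simp [u, deriv_comp_neg]
  have hu₂ : deriv (deriv u) = fun y => -deriv (deriv e) (-y) := by
    funext y; simp [hu₁, deriv_comp_neg]
  obtain ⟨h₀, h₁, h₂⟩ := tendsto_atBot_of_ode hL ((hf₂.comp_neg.isMonostable hd).div_const hd)
    (u := u) (he.differentiable.comp differentiable_neg).neg
    (hu₁ ▸ he.differentiable_deriv.comp differentiable_neg)
    (let ⟨M, hM⟩ := he.bdd; ⟨M, fun x => by simpa [u] using hM (-x)⟩)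
    (fun x n k hnk => by simpa [u, sub_eq_neg_add] using he.mono (-x) hnk)
    (let ⟨x, hx⟩ := he.neg; ⟨-x, by simpa [u] using hx⟩)
    (let ⟨m, hm⟩ := hzero; ⟨-m, fun y hy => neg_le.1 (hm (by simpa [u] using hy))⟩)
    fun x hx => by
      have hx' : e (-x) < 0 := by simpa [u] using hx
      rw [hu₂, neg_neg, ← neg_neg (deriv (deriv e) (-x)), he.ode, eta, max_eq_right hx'.le,
        min_eq_left hx'.le]
      simp only [u]
      field_simp
      ring
  have hneg := tendsto_neg_atTop_atBot (G := ℝ)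
  refine ⟨?_, ?_, ?_⟩
  · simpa [u, comp_def] using (h₀.comp hneg).neg
  · simpa [hu₁, comp_def] using h₁.comp hneg
  · simpa [hu₂, comp_def] using (h₂.comp hneg).neg

end SegEquilibrium

/-- behavior of a segregated stationary equilibrium at infinity, in
`C²` norm on the period cells. -/
theorem seg_equilibrium_behavior_at_infinity
    (L d α a₁ a₂ : ℝ) (hL : 0 < L) (hd : 0 < d) (hα : 0 < α)
    (f₁ f₂ : ℝ → ℝ → ℝ) (hf₁ : Admissible L f₁ a₁) (hf₂ : Admissible L f₂ a₂)
    (e : ℝ → ℝ) (he : SegEquilibrium L d α f₁ f₂ e) :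
    ((∃ m, IsLeast {y : ℝ | e y = 0} m) →
      ∀ ε > 0, ∃ N : ℕ, ∀ n : ℕ, N ≤ n →
        ∀ x ∈ Icc (-((n : ℝ) + 1) * L) (-(n : ℝ) * L),
          |e x - α * a₁| + |deriv e x| + |deriv (deriv e) x| < ε) ∧
    ((∃ m, IsGreatest {y : ℝ | e y = 0} m) →
      ∀ ε > 0, ∃ N : ℕ, ∀ n : ℕ, N ≤ n →
        ∀ x ∈ Icc ((n : ℝ) * L) (((n : ℝ) + 1) * L),
          |e x + d * a₂| + |deriv e x| + |deriv (deriv e) x| < ε) := by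
  refine ⟨fun ⟨m, hm⟩ ε hε => ?_, fun ⟨m, hm⟩ ε hε => ?_⟩
  · obtain ⟨h₀, h₁, h₂⟩ := he.tendsto_atBot hL hα hf₁ ⟨m, hm.2⟩
    exact exists_forall_Icc_of_eventually_atBot hL
      (eventually_abs_add_abs_add_abs_lt h₀ h₁ h₂ hε)
  · obtain ⟨h₀, h₁, h₂⟩ := he.tendsto_atTop hL hd hf₂ ⟨m, hm.2⟩
    simpa only [sub_neg_eq_add] using exists_forall_Icc_of_eventually_atTop hL
      (eventually_abs_add_abs_add_abs_lt h₀ h₁ h₂ hε)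
end
end
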